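/- arXiv:1907.03411 — 4 statements merged into one kernel-verified Lean document; each statement's English description precedes it below -/
import Mathlib

section
/- Let X̄ ~ VS^d (volume-rescaled sampling of size d), and let T ⊆ {1,…,d} with |T| = t. Then the marginal distribution of the t rows of X̄ indexed by T satisfies, for every measurable set A of t×d matrices: Pr(X̄_T ∈ A) = E_{X ~ D_X^t}[ 1_{X ∈ A} · det(X Σ⁻¹ Xᵀ) ] / d^{t̲}, where d^{t̲} := d(d−1)⋯(d−t+1). -/
open MeasureTheory ProbabilityTheory Matrix
open scoped ENNReal

/-- The second-moment matrix `Σ = E[x xᵀ]` of a distribution on row vectors in `ℝ^d`. -/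
noncomputable def secondMoment {d : ℕ} (μ : Measure (Fin d → ℝ)) :
    Matrix (Fin d) (Fin d) ℝ :=
  Matrix.of fun i j => ∫ x, x i * x j ∂μ

/-- Volume-rescaled sampling of size `k` from `μ`: the measure on `k × d` matrices whose
density with respect to `μ^k` is `det(XᵀX) / (k^{d̲} · det Σ)`. -/
noncomputable def VS {d : ℕ} (μ : Measure (Fin d → ℝ)) (k : ℕ) :
    Measure (Fin k → Fin d → ℝ) :=
  (Measure.pi fun _ : Fin k => μ).withDensity fun X =>
    ENNReal.ofReal (((Matrix.of X)ᵀ * Matrix.of X).det /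
      ((k.descFactorial d : ℝ) * (secondMoment μ).det))

section Algebra

set_option linter.unusedSectionVars false

variable {ι : Type} [Fintype ι] [DecidableEq ι]

lemma det_updateRow_finset_sum {α : Type*} (M : Matrix ι ι ℝ) (p : ι) (s : Finset α)
    (g : α → ι → ℝ) :
    (M.updateRow p (∑ a ∈ s, g a)).det = ∑ a ∈ s, (M.updateRow p (g a)).det := by
  classical
  induction s using Finset.cons_induction with
  | empty =>
      simp only [Finset.sum_empty]
      exact Matrix.det_eq_zero_of_row_eq_zero p (fun j => by simp)
  | cons a s ha ih =>
      simp only [Finset.sum_cons, Matrix.det_updateRow_add, ih]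

lemma det_updateRow_basis (M : Matrix ι ι ℝ) (p : ι) (r : ι → ℝ) :
    (M.updateRow p r).det = ∑ c, r c * (M.updateRow p (Pi.single c 1)).det := by
  have hr : r = ∑ c : ι, r c • (Pi.single c 1 : ι → ℝ) := by
    funext x
    simp [Pi.single_apply, Finset.sum_ite_eq', mul_ite]
  calc (M.updateRow p r).det = (M.updateRow p (∑ c : ι, r c • (Pi.single c 1 : ι → ℝ))).det := by
        rw [← hr]
    _ = ∑ c, (M.updateRow p (r c • (Pi.single c 1 : ι → ℝ))).det :=
        det_updateRow_finset_sum M p Finset.univ _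
    _ = ∑ c, r c * (M.updateRow p (Pi.single c 1)).det := by
        simp [Matrix.det_updateRow_smul]

/-- the bordered determinant identity -/
lemma det_bordered (G : Matrix ι ι ℝ) (β : ℝ) (w u : ι → ℝ) :
    (Matrix.fromBlocks (Matrix.of fun _ _ : Unit => β) (Matrix.of fun _ j => w j)
      (Matrix.of fun i _ => u i) G).det
      = β * G.det - ∑ b, w b * ((Matrix.adjugate G) *ᵥ u) b := by
  classical
  set M := Matrix.fromBlocks (Matrix.of fun _ _ : Unit => β) (Matrix.of fun _ j => w j)
      (Matrix.of fun i _ => u i) G with hM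
  have hrow : M (Sum.inl ()) = Sum.elim (fun _ => β) w := by
    funext c; cases c <;> rfl
  have h1 : M = M.updateRow (Sum.inl ()) (Sum.elim (fun _ => β) w) := by
    rw [← hrow, Matrix.updateRow_eq_self]
  have hdiag : (M.updateRow (Sum.inl ()) ((Pi.single (Sum.inl ()) 1 : Unit ⊕ ι → ℝ))) =
      Matrix.fromBlocks 1 0 (Matrix.of fun i _ => u i) G := by
    ext a b
    rcases a with a | a <;> rcases b with b | b <;>
      simp [Matrix.updateRow_apply, Pi.single_apply, hM, Matrix.fromBlocks]
  have hdetdiag : (M.updateRow (Sum.inl ()) ((Pi.single (Sum.inl ()) 1 : Unit ⊕ ι → ℝ))).det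
      = G.det := by
    rw [hdiag, Matrix.det_fromBlocks_zero₁₂]; simp
  have hoff : ∀ b : ι,
      (M.updateRow (Sum.inl ()) ((Pi.single (Sum.inr b) 1 : Unit ⊕ ι → ℝ))).det
      = -(G.updateCol b u).det := by
    intro b
    have hsum : ((Pi.single (Sum.inl ()) 1 : Unit ⊕ ι → ℝ)
        + (Pi.single (Sum.inr b) 1 : Unit ⊕ ι → ℝ)) =
        (Sum.elim (fun _ => (1:ℝ)) (fun j => (Pi.single b 1 : ι → ℝ) j) : Unit ⊕ ι → ℝ) := by
      funext c
      rcases c with c | c <;> simp [Pi.single_apply]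
    have hF : (M.updateRow (Sum.inl ())
        (Sum.elim (fun _ => (1:ℝ)) (fun j => (Pi.single b 1 : ι → ℝ) j))) =
        Matrix.fromBlocks 1 (Matrix.of fun _ j => (Pi.single b 1 : ι → ℝ) j)
          (Matrix.of fun i _ => u i) G := by
      ext a c
      rcases a with a | a <;> rcases c with c | c <;>
        simp [Matrix.updateRow_apply, hM, Matrix.fromBlocks]
    have hfactor : Matrix.fromBlocks (1 : Matrix Unit Unit ℝ)
          (Matrix.of fun _ j => (Pi.single b 1 : ι → ℝ) j) (Matrix.of fun i _ => u i) G
        = Matrix.fromBlocks (1 : Matrix Unit Unit ℝ) 0 (Matrix.of fun i _ => u i) 1 *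
          Matrix.fromBlocks (1 : Matrix Unit Unit ℝ)
            (Matrix.of fun _ j => (Pi.single b 1 : ι → ℝ) j) 0
            (G - Matrix.of fun i j => u i * (Pi.single b 1 : ι → ℝ) j) := by
      rw [Matrix.fromBlocks_multiply]
      ext a c
      rcases a with a | a <;> rcases c with c | c <;>
        simp [Matrix.mul_apply, Matrix.fromBlocks, Fintype.sum_unique]
    have hGsub : (G - Matrix.of fun i j => u i * (Pi.single b 1 : ι → ℝ) j)
        = G.updateCol b (fun i => G i b - u i) := by
      ext i j
      by_cases h : j = b <;> simp [Matrix.updateCol_apply, h, Pi.single_apply]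
    have hdetG : (G - Matrix.of fun i j => u i * (Pi.single b 1 : ι → ℝ) j).det
        = G.det - (G.updateCol b u).det := by
      rw [hGsub]
      have : (fun i => G i b - u i) = (fun i => G i b) + (-u) := by
        funext i; simp [sub_eq_add_neg]
      rw [this, Matrix.det_updateCol_add]
      have hneg : (-u) = (-1 : ℝ) • u := by funext i; simp
      rw [hneg, Matrix.det_updateCol_smul, Matrix.updateCol_eq_self]
      ring
    have hdetF : (M.updateRow (Sum.inl ())
        (Sum.elim (fun _ => (1:ℝ)) (fun j => (Pi.single b 1 : ι → ℝ) j))).det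
        = G.det - (G.updateCol b u).det := by
      rw [hF, hfactor, Matrix.det_mul, Matrix.det_fromBlocks_zero₁₂,
        Matrix.det_fromBlocks_zero₂₁, hdetG]
      simp
    have hadd := Matrix.det_updateRow_add M (Sum.inl ())
      ((Pi.single (Sum.inl ()) 1 : Unit ⊕ ι → ℝ)) ((Pi.single (Sum.inr b) 1 : Unit ⊕ ι → ℝ))
    rw [hsum, hdetF, hdetdiag] at hadd
    linarith
  calc M.det = (M.updateRow (Sum.inl ()) (Sum.elim (fun _ => β) w)).det := by rw [← h1]
    _ = ∑ c, Sum.elim (fun _ => β) w c * (M.updateRow (Sum.inl ()) (Pi.single c 1)).det :=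
        det_updateRow_basis M _ _
    _ = β * G.det + ∑ b, w b * -(G.updateCol b u).det := by
        rw [Fintype.sum_sum_type]
        simp [hdetdiag, hoff]
    _ = β * G.det - ∑ b, w b * ((Matrix.adjugate G) *ᵥ u) b := by
        rw [sub_eq_add_neg, ← Finset.sum_neg_distrib]
        congr 1
        refine Finset.sum_congr rfl fun b _ => ?_
        rw [← Matrix.cramer_eq_adjugate_mulVec, Matrix.cramer_apply]
        ring

end Algebra

noncomputable def gram {d : ℕ} {ι : Type} (B : Matrix (Fin d) (Fin d) ℝ)
    (v : ι → Fin d → ℝ) [Fintype ι] : Matrix ι ι ℝ :=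
  Matrix.of v * B * (Matrix.of v)ᵀ

section Gram

set_option linter.unusedSectionVars false

variable {d : ℕ} {ι : Type} [Fintype ι] [DecidableEq ι] {B : Matrix (Fin d) (Fin d) ℝ}

lemma gram_apply (v : ι → Fin d → ℝ) (a b : ι) :
    gram B v a b = ∑ j, ∑ l, v a j * B j l * v b l := by
  simp only [_root_.gram, Matrix.mul_apply, Matrix.transpose_apply, Matrix.of_apply]
  rw [Finset.sum_comm]
  refine Finset.sum_congr rfl fun j _ => ?_
  rw [Finset.sum_mul]

lemma gram_comp {ι' : Type} [Fintype ι'] (v : ι → Fin d → ℝ) (e : ι' → ι) :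
    gram B (v ∘ e) = (gram B v).submatrix e e := by
  ext a b
  simp [Matrix.mul_apply, _root_.gram]

lemma gram_det_comp {ι' : Type} [Fintype ι'] [DecidableEq ι'] (v : ι → Fin d → ℝ) (e : ι' ≃ ι) :
    (gram B (v ∘ e)).det = (gram B v).det := by
  rw [gram_comp, Matrix.det_submatrix_equiv_self]

lemma gram_posSemidef (hB : B.PosSemidef) (v : ι → Fin d → ℝ) :
    (gram B v).PosSemidef := by
  have := hB.mul_mul_conjTranspose_same (Matrix.of v)
  rwa [Matrix.conjTranspose_eq_transpose_of_trivial] at this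

lemma posSemidef_det_nonneg {M : Matrix ι ι ℝ} (hM : M.PosSemidef) : 0 ≤ M.det := by
  rw [hM.isHermitian.det_eq_prod_eigenvalues]
  exact Finset.prod_nonneg fun i _ => by simpa using hM.eigenvalues_nonneg i

lemma gram_det_nonneg (hB : B.PosSemidef) (v : ι → Fin d → ℝ) :
    0 ≤ (gram B v).det := posSemidef_det_nonneg (gram_posSemidef hB v)

end Gram

section Shuffle

lemma sum4_comm {α β γ δ : Type} [Fintype α] [Fintype β] [Fintype γ] [Fintype δ]
    (f : α → β → γ → δ → ℝ) :
    ∑ a, ∑ b, ∑ c, ∑ e, f a b c e = ∑ c, ∑ e, ∑ a, ∑ b, f a b c e := by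
  calc ∑ a, ∑ b, ∑ c, ∑ e, f a b c e
      = ∑ p : α × β, ∑ c, ∑ e, f p.1 p.2 c e :=
        (Fintype.sum_prod_type (f := fun p : α × β => ∑ c, ∑ e, f p.1 p.2 c e)).symm
    _ = ∑ p : α × β, ∑ q : γ × δ, f p.1 p.2 q.1 q.2 :=
        Finset.sum_congr rfl fun p _ =>
          (Fintype.sum_prod_type (f := fun q : γ × δ => f p.1 p.2 q.1 q.2)).symm
    _ = ∑ q : γ × δ, ∑ p : α × β, f p.1 p.2 q.1 q.2 := Finset.sum_comm
    _ = ∑ q : γ × δ, ∑ a, ∑ b, f a b q.1 q.2 :=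
        Finset.sum_congr rfl fun q _ =>
          Fintype.sum_prod_type (f := fun p : α × β => f p.1 p.2 q.1 q.2)
    _ = ∑ c, ∑ e, ∑ a, ∑ b, f a b c e :=
        Fintype.sum_prod_type (f := fun q : γ × δ => ∑ a, ∑ b, f a b q.1 q.2)

variable {d : ℕ} {ι : Type} [Fintype ι]

lemma quad_expand (A : Matrix ι ι ℝ) (p q : ι → Fin d → ℝ) (y : Fin d → ℝ) :
    ∑ b, (∑ j, y j * p b j) * (∑ a, A b a * (∑ l, q a l * y l))
      = ∑ j, ∑ l, (∑ b, ∑ a, A b a * (p b j * q a l)) * (y j * y l) := by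
  have lhs_eq : ∀ b, (∑ j, y j * p b j) * (∑ a, A b a * (∑ l, q a l * y l))
      = ∑ a, ∑ j, ∑ l, (A b a * (p b j * q a l)) * (y j * y l) := by
    intro b
    rw [Finset.mul_sum]
    refine Finset.sum_congr rfl fun a _ => ?_
    rw [Finset.sum_mul]
    refine Finset.sum_congr rfl fun j _ => ?_
    rw [Finset.mul_sum, Finset.mul_sum]
    refine Finset.sum_congr rfl fun l _ => by ring
  have rhs_eq : ∀ j l, (∑ b, ∑ a, A b a * (p b j * q a l)) * (y j * y l)
      = ∑ b, ∑ a, (A b a * (p b j * q a l)) * (y j * y l) := by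
    intro j l
    rw [Finset.sum_mul]
    refine Finset.sum_congr rfl fun b _ => by rw [Finset.sum_mul]
  simp only [lhs_eq, rhs_eq]
  exact sum4_comm fun b a j l => (A b a * (p b j * q a l)) * (y j * y l)

lemma sandwich {S B : Matrix (Fin d) (Fin d) ℝ} (hBtSBt : Bᵀ * S * Bᵀ = Bᵀ)
    (v : ι → Fin d → ℝ) (a b : ι) :
    ∑ j, ∑ l, (∑ x, B j x * v b x) * S j l * (∑ x, v a x * B x l)
      = ∑ j, ∑ l, v a j * B j l * v b l := by
  have key : ∀ p' q' : Fin d, ∑ j, ∑ l, B j p' * S j l * B q' l = B q' p' := by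
    intro p' q'
    have h : (Bᵀ * S * Bᵀ) p' q' = ∑ l, ∑ j, B j p' * S j l * B q' l := by
      simp only [Matrix.mul_apply, Matrix.transpose_apply, Finset.sum_mul]
    rw [Finset.sum_comm, ← h, hBtSBt, Matrix.transpose_apply]
  calc ∑ j, ∑ l, (∑ x, B j x * v b x) * S j l * (∑ x, v a x * B x l)
      = ∑ j, ∑ l, ∑ x', ∑ x, (v b x * v a x') * (B j x * S j l * B x' l) := by
        refine Finset.sum_congr rfl fun j _ => Finset.sum_congr rfl fun l _ => ?_
        rw [Finset.mul_sum]
        refine Finset.sum_congr rfl fun x' _ => ?_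
        rw [Finset.sum_mul, Finset.sum_mul]
        refine Finset.sum_congr rfl fun x _ => by ring
    _ = ∑ x', ∑ x, ∑ j, ∑ l, (v b x * v a x') * (B j x * S j l * B x' l) :=
        sum4_comm fun j l x' x => (v b x * v a x') * (B j x * S j l * B x' l)
    _ = ∑ x', ∑ x, (v b x * v a x') * (∑ j, ∑ l, B j x * S j l * B x' l) := by
        refine Finset.sum_congr rfl fun x' _ => Finset.sum_congr rfl fun x _ => ?_
        simp only [← Finset.mul_sum]
    _ = ∑ x', ∑ x, (v b x * v a x') * B x' x := by
        refine Finset.sum_congr rfl fun x' _ => Finset.sum_congr rfl fun x _ => by rw [key]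
    _ = ∑ j, ∑ l, v a j * B j l * v b l :=
        Finset.sum_congr rfl fun j _ => Finset.sum_congr rfl fun l _ => by ring

end Shuffle

section Moments

set_option linter.unusedSectionVars false

variable {d : ℕ} (μ : Measure (Fin d → ℝ)) [IsProbabilityMeasure μ]

lemma secondMoment_apply (j l : Fin d) : secondMoment μ j l = ∫ x, x j * x l ∂μ := rfl

lemma secondMoment_symm : (secondMoment μ)ᵀ = secondMoment μ := by
  ext j l
  simp only [Matrix.transpose_apply, secondMoment, Matrix.of_apply]
  congr 1; funext x; ring

lemma integrable_quad
    (hmom : ∀ i j : Fin d, Integrable (fun x : Fin d → ℝ => x i * x j) μ)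
    (c : Fin d → Fin d → ℝ) :
    Integrable (fun y : Fin d → ℝ => ∑ j, ∑ l, c j l * (y j * y l)) μ := by
  refine integrable_finset_sum _ fun j _ => integrable_finset_sum _ fun l _ => ?_
  exact (hmom j l).const_mul _

lemma integral_quad
    (hmom : ∀ i j : Fin d, Integrable (fun x : Fin d → ℝ => x i * x j) μ)
    (c : Fin d → Fin d → ℝ) :
    ∫ y, (∑ j, ∑ l, c j l * (y j * y l)) ∂μ = ∑ j, ∑ l, c j l * secondMoment μ j l := by
  rw [integral_finset_sum _ fun j _ =>
    (integrable_finset_sum _ fun l _ => (hmom j l).const_mul _)]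
  refine Finset.sum_congr rfl fun j _ => ?_
  rw [integral_finset_sum _ fun l _ => (hmom j l).const_mul _]
  refine Finset.sum_congr rfl fun l _ => ?_
  rw [MeasureTheory.integral_const_mul, secondMoment_apply]

lemma secondMoment_posSemidef
    (hmom : ∀ i j : Fin d, Integrable (fun x : Fin d → ℝ => x i * x j) μ) :
    (secondMoment μ).PosSemidef := by
  refine Matrix.PosSemidef.of_dotProduct_mulVec_nonneg ?_ ?_
  · rw [Matrix.IsHermitian, Matrix.conjTranspose_eq_transpose_of_trivial]
    exact secondMoment_symm μ
  · intro x
    have hx : star x = x := by simp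
    rw [hx]
    have h1 : x ⬝ᵥ (secondMoment μ *ᵥ x) = ∑ j, ∑ l, (x j * x l) * secondMoment μ j l := by
      simp only [dotProduct, Matrix.mulVec, Finset.mul_sum]
      refine Finset.sum_congr rfl fun j _ => Finset.sum_congr rfl fun l _ => by ring
    rw [h1, ← integral_quad μ hmom]
    have h2 : ∀ y : Fin d → ℝ, ∑ j, ∑ l, (x j * x l) * (y j * y l) = (∑ j, x j * y j) ^ 2 := by
      intro y
      rw [sq, Finset.sum_mul_sum]
      refine Finset.sum_congr rfl fun j _ => Finset.sum_congr rfl fun l _ => by ring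
    refine integral_nonneg fun y => ?_
    rw [h2 y]
    positivity

end Moments

section Gram1

set_option linter.unusedSectionVars false
set_option maxHeartbeats 1000000

variable {d : ℕ} (μ : Measure (Fin d → ℝ)) [IsProbabilityMeasure μ]

lemma gram1 {ι : Type} [Fintype ι] [DecidableEq ι]
    (hmom : ∀ i j : Fin d, Integrable (fun x : Fin d → ℝ => x i * x j) μ)
    (hSig : IsUnit (secondMoment μ).det)
    (v : ι → Fin d → ℝ) :
    ∫⁻ y, ENNReal.ofReal ((gram (secondMoment μ)⁻¹ (Sum.elim (fun _ : Unit => y) v)).det) ∂μ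
      = ENNReal.ofReal (((d : ℝ) - (Fintype.card ι : ℝ))
          * (gram (secondMoment μ)⁻¹ v).det) := by
  set S : Matrix (Fin d) (Fin d) ℝ := secondMoment μ with hS
  set B : Matrix (Fin d) (Fin d) ℝ := S⁻¹ with hB
  set G : Matrix ι ι ℝ := gram B v with hG
  have hSsym : Sᵀ = S := secondMoment_symm μ
  have hBS : B * S = 1 := Matrix.nonsing_inv_mul S hSig
  have hBSB : B * S * B = B := by rw [hBS, one_mul]
  have hBtSBt : Bᵀ * S * Bᵀ = Bᵀ := by
    have h : Bᵀ * S * Bᵀ = (B * Sᵀ * B)ᵀ := by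
      rw [Matrix.transpose_mul, Matrix.transpose_mul, Matrix.transpose_transpose,
        Matrix.mul_assoc]
    rw [h, hSsym, hBSB]
  have hBpsd : B.PosSemidef := (secondMoment_posSemidef μ hmom).inv
  -- block decomposition of the bordered gram matrix
  have hblocks : ∀ y : Fin d → ℝ, gram B (Sum.elim (fun _ : Unit => y) v) =
      Matrix.fromBlocks (Matrix.of fun _ _ : Unit => ∑ j, ∑ l, y j * B j l * y l)
        (Matrix.of fun _ b => ∑ j, ∑ l, y j * B j l * v b l)
        (Matrix.of fun a _ => ∑ j, ∑ l, v a j * B j l * y l) G := by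
    intro y; ext a b
    rcases a with a | a <;> rcases b with b | b <;>
      simp [_root_.gram_apply, Matrix.fromBlocks, hG]
  have hdet : ∀ y : Fin d → ℝ, (gram B (Sum.elim (fun _ : Unit => y) v)).det
      = (∑ j, ∑ l, y j * B j l * y l) * G.det
        - ∑ b, (∑ j, ∑ l, y j * B j l * v b l)
            * ((Matrix.adjugate G) *ᵥ (fun a => ∑ j, ∑ l, v a j * B j l * y l)) b := by
    intro y; rw [hblocks y]; exact det_bordered G _ _ _
  set P : ι → Fin d → ℝ := fun b j => ∑ l, B j l * v b l with hP
  set Q : ι → Fin d → ℝ := fun a l => ∑ j, v a j * B j l with hQ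
  set c : Fin d → Fin d → ℝ :=
    fun j l => B j l * G.det - ∑ b, ∑ a, (Matrix.adjugate G) b a * (P b j * Q a l) with hc
  have hkey : ∀ y : Fin d → ℝ, (gram B (Sum.elim (fun _ : Unit => y) v)).det
      = ∑ j, ∑ l, c j l * (y j * y l) := by
    intro y
    rw [hdet y]
    have h1 : (∑ j, ∑ l, y j * B j l * y l) * G.det
        = ∑ j, ∑ l, (B j l * G.det) * (y j * y l) := by
      rw [Finset.sum_mul]
      refine Finset.sum_congr rfl fun j _ => ?_
      rw [Finset.sum_mul]
      refine Finset.sum_congr rfl fun l _ => by ring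
    have e1 : ∀ b, (∑ j, ∑ l, y j * B j l * v b l) = ∑ j, y j * P b j := by
      intro b
      refine Finset.sum_congr rfl fun j _ => ?_
      rw [hP]
      simp only [Finset.mul_sum]
      refine Finset.sum_congr rfl fun l _ => by ring
    have e2 : ∀ bb, ((Matrix.adjugate G) *ᵥ (fun a => ∑ j, ∑ l, v a j * B j l * y l)) bb
        = ∑ a, Matrix.adjugate G bb a * (∑ l, Q a l * y l) := by
      intro bb
      simp only [Matrix.mulVec, dotProduct]
      refine Finset.sum_congr rfl fun a _ => ?_
      congr 1
      rw [Finset.sum_comm]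
      refine Finset.sum_congr rfl fun l _ => ?_
      rw [hQ]
      simp only [Finset.sum_mul]
    have h2 : ∑ b, (∑ j, ∑ l, y j * B j l * v b l)
          * ((Matrix.adjugate G) *ᵥ (fun a => ∑ j, ∑ l, v a j * B j l * y l)) b
        = ∑ j, ∑ l, (∑ b, ∑ a, (Matrix.adjugate G) b a * (P b j * Q a l)) * (y j * y l) := by
      simp only [e1, e2]
      exact quad_expand (Matrix.adjugate G) P Q y
    rw [h1, h2, ← Finset.sum_sub_distrib]
    refine Finset.sum_congr rfl fun j _ => ?_
    rw [← Finset.sum_sub_distrib]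
    refine Finset.sum_congr rfl fun l _ => by rw [hc]; ring
  have hpos : ∀ y : Fin d → ℝ, 0 ≤ (gram B (Sum.elim (fun _ : Unit => y) v)).det :=
    fun y => gram_det_nonneg hBpsd _
  have hint : Integrable (fun y => (gram B (Sum.elim (fun _ : Unit => y) v)).det) μ :=
    (integrable_quad μ hmom c).congr (ae_of_all _ fun y => (hkey y).symm)
  rw [← MeasureTheory.ofReal_integral_eq_lintegral_ofReal hint (ae_of_all _ hpos)]
  congr 1
  have hI : ∫ y, (gram B (Sum.elim (fun _ : Unit => y) v)).det ∂μ
      = ∑ j, ∑ l, c j l * S j l := by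
    rw [integral_congr_ae (ae_of_all _ hkey)]
    exact integral_quad μ hmom c
  rw [hI]
  -- the trace computations
  have hT1 : ∑ j, ∑ l, B j l * S j l = (d : ℝ) := by
    have h1 : (B * Sᵀ).trace = ∑ j, ∑ l, B j l * S j l := by
      simp [Matrix.trace, Matrix.diag, Matrix.mul_apply]
    rw [← h1, hSsym, hBS, Matrix.trace_one]
    simp
  have hT2 : ∀ b a : ι, ∑ j, ∑ l, P b j * S j l * Q a l = G a b := by
    intro b a
    have h := sandwich hBtSBt v a b
    rw [hG, _root_.gram_apply]
    rw [hP, hQ]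
    exact h
  have hT3 : ∑ b, ∑ a, Matrix.adjugate G b a * G a b = (Fintype.card ι : ℝ) * G.det := by
    have h1 : ∑ b, ∑ a, Matrix.adjugate G b a * G a b = (Matrix.adjugate G * G).trace := by
      simp [Matrix.trace, Matrix.diag, Matrix.mul_apply]
    rw [h1, Matrix.adjugate_mul, Matrix.trace_smul, Matrix.trace_one]
    simp [mul_comm]
  calc ∑ j, ∑ l, c j l * S j l
      = ∑ j, ∑ l, (B j l * S j l * G.det
          - ∑ b, ∑ a, Matrix.adjugate G b a * (P b j * S j l * Q a l)) := by
        refine Finset.sum_congr rfl fun j _ => Finset.sum_congr rfl fun l _ => ?_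
        rw [hc]
        rw [sub_mul, Finset.sum_mul]
        congr 1
        · ring
        · refine Finset.sum_congr rfl fun b _ => ?_
          rw [Finset.sum_mul]
          refine Finset.sum_congr rfl fun a _ => by ring
    _ = (∑ j, ∑ l, B j l * S j l) * G.det
          - ∑ b, ∑ a, Matrix.adjugate G b a * (∑ j, ∑ l, P b j * S j l * Q a l) := by
        simp only [Finset.sum_sub_distrib]
        congr 1
        · simp only [← Finset.sum_mul]
        · rw [sum4_comm fun j l b a => Matrix.adjugate G b a * (P b j * S j l * Q a l)]
          simp only [← Finset.mul_sum]
    _ = (d : ℝ) * G.det - (Fintype.card ι : ℝ) * G.det := by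
        rw [hT1]
        congr 1
        rw [← hT3]
        exact Finset.sum_congr rfl fun b _ => Finset.sum_congr rfl fun a _ => by rw [hT2]
    _ = ((d : ℝ) - (Fintype.card ι : ℝ)) * G.det := by ring

end Gram1

section Meas

lemma measurable_det_entries {α : Type*} [MeasurableSpace α] {ι : Type} [Fintype ι]
    [DecidableEq ι] {f : α → Matrix ι ι ℝ} (hf : ∀ i j, Measurable fun a => f a i j) :
    Measurable fun a => (f a).det := by
  simp_rw [Matrix.det_apply]
  refine Finset.measurable_sum _ fun σ _ => ?_
  have h : Measurable fun a => ∏ i, f a (σ i) i :=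
    Finset.measurable_prod _ fun i _ => hf _ _
  simpa [Units.smul_def, zsmul_eq_mul] using h.const_mul (((Equiv.Perm.sign σ : ℤ) : ℝ))

lemma measurable_gram_det {α : Type*} [MeasurableSpace α] {d : ℕ} {ι : Type} [Fintype ι]
    [DecidableEq ι] (B : Matrix (Fin d) (Fin d) ℝ) (rows : α → ι → Fin d → ℝ)
    (hrows : ∀ i j, Measurable fun a => rows a i j) :
    Measurable fun a => (gram B (rows a)).det := by
  refine measurable_det_entries fun i j => ?_
  simp_rw [_root_.gram_apply]
  refine Finset.measurable_sum _ fun p _ => Finset.measurable_sum _ fun q _ => ?_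
  exact ((hrows i p).mul measurable_const).mul (hrows j q)

end Meas

section ClaimC

set_option linter.unusedSectionVars false
set_option maxHeartbeats 1000000

variable {d : ℕ} (μ : Measure (Fin d → ℝ)) [IsProbabilityMeasure μ]

def zeroEquiv (ι : Type) : ι ≃ (ι ⊕ Fin 0) where
  toFun := Sum.inl
  invFun := Sum.elim id (fun i => absurd i.2 (by omega))
  left_inv := fun a => rfl
  right_inv := by
    rintro (a | i)
    · rfl
    · exact absurd i.2 (by omega)


def stepEquiv (ι : Type) (k : ℕ) : (Unit ⊕ (ι ⊕ Fin k)) ≃ (ι ⊕ Fin (k + 1)) where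
  toFun := Sum.elim (fun _ => Sum.inr 0)
    (Sum.elim (fun a => Sum.inl a) (fun i => Sum.inr i.succ))
  invFun := Sum.elim (fun a => Sum.inr (Sum.inl a))
    (fun i => Fin.cases (Sum.inl ()) (fun i' => Sum.inr (Sum.inr i')) i)
  left_inv := by rintro (_ | (a | i)) <;> simp
  right_inv := by
    rintro (a | i)
    · rfl
    · induction i using Fin.cases <;> simp

lemma claimC
    (hmom : ∀ i j : Fin d, Integrable (fun x : Fin d → ℝ => x i * x j) μ)
    (hSig : IsUnit (secondMoment μ).det) (k : ℕ) :
    ∀ {ι : Type} [Fintype ι] [DecidableEq ι] (v : ι → Fin d → ℝ),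
    Fintype.card ι + k ≤ d →
    ∫⁻ Y : Fin k → Fin d → ℝ,
        ENNReal.ofReal ((gram (secondMoment μ)⁻¹ (Sum.elim v Y)).det)
        ∂(Measure.pi fun _ : Fin k => μ)
      = (((d - Fintype.card ι).descFactorial k : ℕ) : ℝ≥0∞)
          * ENNReal.ofReal ((gram (secondMoment μ)⁻¹ v).det) := by
  induction k with
  | zero =>
      intro ι _ _ v _
      have hrows : ∀ Y : Fin 0 → Fin d → ℝ,
          ((gram (secondMoment μ)⁻¹ (Sum.elim v Y)).det)
            = (gram (secondMoment μ)⁻¹ v).det := by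
        intro Y
        rw [← gram_det_comp (Sum.elim v Y) (zeroEquiv ι)]
        rfl
      simp only [hrows]
      rw [lintegral_const]
      simp
  | succ k IH =>
      intro ι _ _ v hcard
      set B' : Matrix (Fin d) (Fin d) ℝ := (secondMoment μ)⁻¹ with hB'
      -- the reindexing equivalence
      have hrows : ∀ (y : Fin d → ℝ) (Y : Fin k → Fin d → ℝ),
          ((gram B' (Sum.elim v (Fin.insertNth 0 y Y))).det)
            = (gram B' (Sum.elim (fun _ : Unit => y) (Sum.elim v Y))).det := by
        intro y Y
        have hre : (Sum.elim v (Fin.insertNth 0 y Y)) ∘ ⇑(stepEquiv ι k)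
            = Sum.elim (fun _ : Unit => y) (Sum.elim v Y) := by
          funext s
          rcases s with _ | s
          · simp only [stepEquiv, Equiv.coe_fn_mk, Function.comp_apply, Sum.elim_inl,
              Sum.elim_inr]
            simp
          · rcases s with a | i
            · simp [stepEquiv]
            · simp only [stepEquiv, Equiv.coe_fn_mk, Function.comp_apply, Sum.elim_inl,
                Sum.elim_inr]
              simp [Fin.insertNth_zero]
        rw [← gram_det_comp (Sum.elim v (Fin.insertNth 0 y Y)) (stepEquiv ι k), hre]
      -- measurability
      have hFmeas : Measurable fun X : Fin (k+1) → Fin d → ℝ =>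
          ENNReal.ofReal ((gram B' (Sum.elim v X)).det) := by
        refine ENNReal.measurable_ofReal.comp (measurable_gram_det B' _ ?_)
        rintro (a | i) j
        · exact measurable_const
        · exact (measurable_pi_apply j).comp (measurable_pi_apply i)
      have hGmeas : Measurable fun Y : Fin k → Fin d → ℝ =>
          ENNReal.ofReal ((gram B' (Sum.elim v Y)).det) := by
        refine ENNReal.measurable_ofReal.comp (measurable_gram_det B' _ ?_)
        rintro (a | i) j
        · exact measurable_const
        · exact (measurable_pi_apply j).comp (measurable_pi_apply i)
      -- split off the first coordinate
      have hmp := (measurePreserving_piFinSuccAbove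
        (fun _ : Fin (k+1) => μ) 0).symm
      calc ∫⁻ Y : Fin (k+1) → Fin d → ℝ,
              ENNReal.ofReal ((gram B' (Sum.elim v Y)).det)
              ∂(Measure.pi fun _ : Fin (k+1) => μ)
          = ∫⁻ p : (Fin d → ℝ) × (Fin k → Fin d → ℝ),
              ENNReal.ofReal ((gram B' (Sum.elim v
                ((MeasurableEquiv.piFinSuccAbove (fun _ : Fin (k+1) => Fin d → ℝ) 0).symm p))).det)
              ∂(μ.prod (Measure.pi fun _ : Fin k => μ)) :=
            (hmp.lintegral_comp hFmeas).symm
        _ = ∫⁻ Y : Fin k → Fin d → ℝ, ∫⁻ y : Fin d → ℝ,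
              ENNReal.ofReal ((gram B' (Sum.elim v
                ((MeasurableEquiv.piFinSuccAbove (fun _ : Fin (k+1) => Fin d → ℝ) 0).symm (y, Y)))).det)
              ∂μ ∂(Measure.pi fun _ : Fin k => μ) := by
            refine lintegral_prod_symm _ ?_
            exact (hFmeas.comp (MeasurableEquiv.piFinSuccAbove _ 0).symm.measurable).aemeasurable
        _ = ∫⁻ Y : Fin k → Fin d → ℝ,
              ((((d : ℕ) - (Fintype.card ι + k) : ℕ) : ℝ≥0∞)
                * ENNReal.ofReal ((gram B' (Sum.elim v Y)).det))
              ∂(Measure.pi fun _ : Fin k => μ) := by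
            refine lintegral_congr fun Y => ?_
            have hpt : ∀ y : Fin d → ℝ,
                ENNReal.ofReal ((gram B' (Sum.elim v
                  ((MeasurableEquiv.piFinSuccAbove (fun _ : Fin (k+1) => Fin d → ℝ) 0).symm (y, Y)))).det)
                = ENNReal.ofReal ((gram B' (Sum.elim (fun _ : Unit => y) (Sum.elim v Y))).det) := by
              intro y
              congr 1
              exact hrows y Y
            rw [lintegral_congr hpt, gram1 μ hmom hSig (Sum.elim v Y)]
            have hcast : ((d : ℝ) - (Fintype.card (ι ⊕ Fin k) : ℝ))
                = (((d - (Fintype.card ι + k) : ℕ)) : ℝ) := by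
              rw [Nat.cast_sub (by omega)]
              simp [Fintype.card_sum]
            rw [hcast, ENNReal.ofReal_mul (by positivity), ENNReal.ofReal_natCast]
        _ = (((d - (Fintype.card ι + k) : ℕ)) : ℝ≥0∞)
              * ∫⁻ Y : Fin k → Fin d → ℝ,
                ENNReal.ofReal ((gram B' (Sum.elim v Y)).det)
                ∂(Measure.pi fun _ : Fin k => μ) :=
            lintegral_const_mul _ hGmeas
        _ = (((d - Fintype.card ι).descFactorial (k+1) : ℕ) : ℝ≥0∞)
              * ENNReal.ofReal ((gram B' v).det) := by
            rw [IH v (by omega)]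
            rw [← mul_assoc, ← Nat.cast_mul]
            congr 2
            rw [Nat.descFactorial_succ]
            congr 1
            omega

end ClaimC


set_option maxHeartbeats 2000000 in
/-- **Marginals of subsets of rows of a size-`d` volume-rescaled sample**
(Lemma 13, Dereziński–Warmuth–Hsu).
If `X̄ ~ VS^d` and `T ⊆ {1,…,d}` has `|T| = t`, then for every measurable set `A` of
`t × d` matrices, `Pr(X̄_T ∈ A) = E_{X ~ μ^t}[1_{X ∈ A} · det(X Σ⁻¹ Xᵀ)] / d^{t̲}`. -/
theorem volume_rescaled_subset_marginal
    {d t : ℕ}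
    (μ : Measure (Fin d → ℝ)) [IsProbabilityMeasure μ]
    (hmom : ∀ i j : Fin d, Integrable (fun x : Fin d → ℝ => x i * x j) μ)
    (hSig : IsUnit (secondMoment μ).det)
    (T : Finset (Fin d)) (hT : T.card = t)
    (A : Set (Fin t → Fin d → ℝ)) (hA : MeasurableSet A) :
    VS μ d {X : Fin d → Fin d → ℝ |
        (fun i : Fin t => X ↑(T.orderIsoOfFin hT i)) ∈ A} =
      (∫⁻ X : Fin t → Fin d → ℝ,
        Set.indicator A
          (fun X => ENNReal.ofReal
            ((Matrix.of X * (secondMoment μ)⁻¹ * (Matrix.of X)ᵀ).det)) X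
        ∂(Measure.pi fun _ : Fin t => μ)) / (d.descFactorial t : ℝ≥0∞) := by
  classical
  have ht : t ≤ d := by
    have h := Finset.card_le_univ T
    rw [hT] at h
    simpa using h
  set k := d - t with hk
  have hTc : Tᶜ.card = k := by rw [Finset.card_compl, hT]; simp [hk]
  set S : Matrix (Fin d) (Fin d) ℝ := secondMoment μ with hS
  set B : Matrix (Fin d) (Fin d) ℝ := S⁻¹ with hB
  set Sset : Set (Fin d → Fin d → ℝ) :=
    {X : Fin d → Fin d → ℝ | (fun i : Fin t => X ↑(T.orderIsoOfFin hT i)) ∈ A} with hSset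
  -- the reindexing equivalence
  let f : Fin t ⊕ Fin k → Fin d := Sum.elim (fun i => (T.orderIsoOfFin hT i : Fin d))
    (fun j => (Tᶜ.orderIsoOfFin hTc j : Fin d))
  have hfinj : Function.Injective f := by
    rintro (i | i) (j | j) h <;> simp only [f, Sum.elim_inl, Sum.elim_inr] at h
    · exact congrArg Sum.inl ((T.orderIsoOfFin hT).injective (Subtype.coe_injective h))
    · have h1 : (↑((T.orderIsoOfFin hT) i) : Fin d) ∈ T := ((T.orderIsoOfFin hT) i).2
      have h2 : (↑((Tᶜ.orderIsoOfFin hTc) j) : Fin d) ∈ Tᶜ := ((Tᶜ.orderIsoOfFin hTc) j).2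
      rw [h] at h1
      exact absurd h1 (Finset.mem_compl.mp h2)
    · have h1 : (↑((T.orderIsoOfFin hT) j) : Fin d) ∈ T := ((T.orderIsoOfFin hT) j).2
      have h2 : (↑((Tᶜ.orderIsoOfFin hTc) i) : Fin d) ∈ Tᶜ := ((Tᶜ.orderIsoOfFin hTc) i).2
      rw [← h] at h1
      exact absurd h1 (Finset.mem_compl.mp h2)
    · exact congrArg Sum.inr ((Tᶜ.orderIsoOfFin hTc).injective (Subtype.coe_injective h))
  have hfsurj : Function.Surjective f := by
    intro x
    by_cases hx : x ∈ T
    · refine ⟨Sum.inl ((T.orderIsoOfFin hT).symm ⟨x, hx⟩), ?_⟩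
      show ↑((T.orderIsoOfFin hT) ((T.orderIsoOfFin hT).symm ⟨x, hx⟩)) = x
      rw [OrderIso.apply_symm_apply]
    · refine ⟨Sum.inr ((Tᶜ.orderIsoOfFin hTc).symm ⟨x, Finset.mem_compl.mpr hx⟩), ?_⟩
      show ↑((Tᶜ.orderIsoOfFin hTc) ((Tᶜ.orderIsoOfFin hTc).symm ⟨x, Finset.mem_compl.mpr hx⟩)) = x
      rw [OrderIso.apply_symm_apply]
  let e : (Fin t ⊕ Fin k) ≃ Fin d := Equiv.ofBijective f ⟨hfinj, hfsurj⟩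
  -- measurability of the main set and integrands
  have hSet : MeasurableSet Sset :=
    (measurable_pi_lambda _ fun i => measurable_pi_apply _) hA
  have hcore : Measurable fun X : Fin d → Fin d → ℝ => ENNReal.ofReal ((gram B X).det) := by
    refine ENNReal.measurable_ofReal.comp (measurable_gram_det B (fun X => X) ?_)
    exact fun i j => (measurable_pi_apply j).comp (measurable_pi_apply i)
  have hg : Measurable fun X : Fin d → Fin d → ℝ =>
      Sset.indicator (fun X => ENNReal.ofReal ((gram B X).det)) X := hcore.indicator hSet
  -- positivity facts
  have hdet0 : S.det ≠ 0 := hSig.ne_zero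
  have hdetpos : 0 < S.det :=
    lt_of_le_of_ne (posSemidef_det_nonneg (secondMoment_posSemidef μ hmom)) (Ne.symm hdet0)
  -- Step 1: unfold VS and simplify the density pointwise
  have hpoint : ∀ X : Fin d → Fin d → ℝ,
      Sset.indicator (fun X => ENNReal.ofReal (((Matrix.of X)ᵀ * Matrix.of X).det /
        ((d.descFactorial d : ℝ) * S.det))) X
      = (d.factorial : ℝ≥0∞)⁻¹
          * Sset.indicator (fun X => ENNReal.ofReal ((gram B X).det)) X := by
    intro X
    have hval : ((Matrix.of X)ᵀ * Matrix.of X).det / ((d.descFactorial d : ℝ) * S.det)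
        = (gram B X).det / (d.factorial : ℝ) := by
      have h1 : ((Matrix.of X)ᵀ * Matrix.of X).det
          = (Matrix.of X).det * (Matrix.of X).det := by
        rw [Matrix.det_mul, Matrix.det_transpose]
      have h2 : (gram B X).det = (Matrix.of X).det * (Matrix.of X).det * (S.det)⁻¹ := by
        rw [_root_.gram, Matrix.det_mul, Matrix.det_mul, Matrix.det_transpose, hB,
          Matrix.det_nonsing_inv, Ring.inverse_eq_inv']
        ring
      rw [h1, h2, Nat.descFactorial_self, div_eq_mul_inv, div_eq_mul_inv, mul_inv]
      ring
    by_cases hX : X ∈ Sset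
    · rw [Set.indicator_of_mem hX, Set.indicator_of_mem hX, hval,
        ENNReal.ofReal_div_of_pos (by positivity), ENNReal.ofReal_natCast,
        div_eq_mul_inv, mul_comm]
    · rw [Set.indicator_of_notMem hX, Set.indicator_of_notMem hX, mul_zero]
  rw [VS, withDensity_apply _ hSet, ← lintegral_indicator hSet]
  rw [lintegral_congr hpoint]
  rw [lintegral_const_mul' _ _ (by simp [Nat.factorial_ne_zero])]
  -- Step 2: transport to the product space
  have hmc := measurePreserving_piCongrLeft (fun _ : Fin d => μ) e
  have hms := measurePreserving_sumPiEquivProdPi_symm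
    (fun _ : Fin t ⊕ Fin k => (μ : Measure (Fin d → ℝ)))
  have hpc : ∀ x' : (Fin t ⊕ Fin k) → Fin d → ℝ,
      (MeasurableEquiv.piCongrLeft (fun _ : Fin d => Fin d → ℝ) e) x'
        = fun i => x' (e.symm i) := by
    intro x'
    funext i
    obtain ⟨j, rfl⟩ : ∃ j, e j = i := ⟨e.symm i, e.apply_symm_apply i⟩
    rw [e.symm_apply_apply]
    rw [MeasurableEquiv.coe_piCongrLeft]
    exact Equiv.piCongrLeft_apply_apply (fun _ : Fin d => Fin d → ℝ) e x' j
  have step2 : ∫⁻ X : Fin d → Fin d → ℝ,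
      Sset.indicator (fun X => ENNReal.ofReal ((gram B X).det)) X
      ∂(Measure.pi fun _ : Fin d => μ)
      = ∫⁻ p : (Fin t → Fin d → ℝ) × (Fin k → Fin d → ℝ),
          Set.indicator A (fun _ => (1 : ℝ≥0∞)) p.1
            * ENNReal.ofReal ((gram B (Sum.elim p.1 p.2)).det)
          ∂((Measure.pi fun _ : Fin t => μ).prod (Measure.pi fun _ : Fin k => μ)) := by
    have hgc : Measurable fun x' : (Fin t ⊕ Fin k) → Fin d → ℝ =>
        Sset.indicator (fun X => ENNReal.ofReal ((gram B X).det))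
          ((MeasurableEquiv.piCongrLeft (fun _ : Fin d => Fin d → ℝ) e) x') := by
      exact hg.comp (MeasurableEquiv.piCongrLeft _ e).measurable
    rw [← hmc.lintegral_comp hg]
    rw [← hms.lintegral_comp hgc]
    refine lintegral_congr fun p => ?_
    obtain ⟨X, Y⟩ := p
    have hrowsval : (MeasurableEquiv.piCongrLeft (fun _ : Fin d => Fin d → ℝ) e)
        ((MeasurableEquiv.sumPiEquivProdPi (fun _ : Fin t ⊕ Fin k => Fin d → ℝ)).symm (X, Y))
        = (Sum.elim X Y) ∘ ⇑e.symm := by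
      rw [hpc]
      funext i
      show (MeasurableEquiv.sumPiEquivProdPi fun _ : Fin t ⊕ Fin k => Fin d → ℝ).symm (X, Y)
          (e.symm i) = Sum.elim X Y (e.symm i)
      generalize e.symm i = s
      rcases s with a | a <;> rfl
    rw [hrowsval]
    have hmem : ((Sum.elim X Y) ∘ ⇑e.symm) ∈ Sset ↔ X ∈ A := by
      rw [hSset]
      simp only [Set.mem_setOf_eq]
      have harg : (fun i : Fin t => ((Sum.elim X Y) ∘ ⇑e.symm) ↑(T.orderIsoOfFin hT i)) = X := by
        funext i
        have hei : e.symm ((T.orderEmbOfFin hT) i) = Sum.inl i := by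
          rw [Equiv.symm_apply_eq]
          exact (Finset.coe_orderIsoOfFin_apply T hT i).symm
        simp [hei]
      rw [harg]
    have hdeteq : (gram B ((Sum.elim X Y) ∘ ⇑e.symm)).det
        = (gram B (Sum.elim X Y)).det := gram_det_comp _ _
    by_cases hX : X ∈ A
    · rw [Set.indicator_of_mem (hmem.mpr hX), Set.indicator_of_mem hX, hdeteq, one_mul]
    · rw [Set.indicator_of_notMem (fun hc => hX (hmem.mp hc)), Set.indicator_of_notMem hX,
        zero_mul]
  rw [step2]
  -- Step 3: Tonelli and the key integral identity
  have hprodmeas : Measurable fun p : (Fin t → Fin d → ℝ) × (Fin k → Fin d → ℝ) =>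
      Set.indicator A (fun _ => (1 : ℝ≥0∞)) p.1
        * ENNReal.ofReal ((gram B (Sum.elim p.1 p.2)).det) := by
    refine Measurable.mul ?_ ?_
    · exact ((measurable_const.indicator hA).comp measurable_fst)
    · refine ENNReal.measurable_ofReal.comp (measurable_gram_det B _ ?_)
      rintro (a | i) j
      · exact (measurable_pi_apply j).comp ((measurable_pi_apply a).comp measurable_fst)
      · exact (measurable_pi_apply j).comp ((measurable_pi_apply i).comp measurable_snd)
  rw [lintegral_prod _ hprodmeas.aemeasurable]
  have hinner : ∀ X : Fin t → Fin d → ℝ,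
      ∫⁻ Y : Fin k → Fin d → ℝ,
        Set.indicator A (fun _ => (1 : ℝ≥0∞)) X
          * ENNReal.ofReal ((gram B (Sum.elim X Y)).det)
        ∂(Measure.pi fun _ : Fin k => μ)
      = (k.factorial : ℝ≥0∞)
          * Set.indicator A (fun X => ENNReal.ofReal ((gram B X).det)) X := by
    intro X
    rw [lintegral_const_mul _ (by
      refine ENNReal.measurable_ofReal.comp (measurable_gram_det B _ ?_)
      rintro (a | i) j
      · exact measurable_const
      · exact (measurable_pi_apply j).comp (measurable_pi_apply i))]
    rw [claimC μ hmom hSig k X (by simp [hk, ht])]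
    simp only [Fintype.card_fin]
    rw [← hk, Nat.descFactorial_self]
    by_cases hX : X ∈ A
    · rw [Set.indicator_of_mem hX, Set.indicator_of_mem hX]
      ring
    · rw [Set.indicator_of_notMem hX, Set.indicator_of_notMem hX]
      simp
  rw [lintegral_congr hinner]
  have hLmeas : Measurable fun X : Fin t → Fin d → ℝ =>
      Set.indicator A (fun X => ENNReal.ofReal ((gram B X).det)) X := by
    refine Measurable.indicator ?_ hA
    refine ENNReal.measurable_ofReal.comp (measurable_gram_det B (fun X => X) ?_)
    exact fun i j => (measurable_pi_apply j).comp (measurable_pi_apply i)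
  rw [lintegral_const_mul _ hLmeas]
  -- Step 4: final arithmetic
  have h1 : ((k.factorial : ℕ) : ℝ≥0∞) ≠ 0 := by
    exact_mod_cast Nat.cast_ne_zero.mpr (Nat.factorial_ne_zero k)
  have h2 : ((k.factorial : ℕ) : ℝ≥0∞) ≠ ⊤ := ENNReal.natCast_ne_top _
  have hfact : (d.factorial : ℝ≥0∞) = (k.factorial : ℝ≥0∞) * (d.descFactorial t : ℝ≥0∞) := by
    rw [← Nat.cast_mul]
    congr 1
    rw [hk]
    exact (Nat.factorial_mul_descFactorial ht).symm
  rw [hfact]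
  set L := ∫⁻ X : Fin t → Fin d → ℝ,
      Set.indicator A (fun X => ENNReal.ofReal ((gram B X).det)) X
      ∂(Measure.pi fun _ : Fin t => μ) with hL
  show ((k.factorial : ℝ≥0∞) * (d.descFactorial t : ℝ≥0∞))⁻¹ * ((k.factorial : ℝ≥0∞) * L)
      = L / (d.descFactorial t : ℝ≥0∞)
  rw [ENNReal.mul_inv (Or.inl h1) (Or.inl h2), div_eq_mul_inv, mul_comm L _]
  calc ((k.factorial : ℝ≥0∞))⁻¹ * ((d.descFactorial t : ℝ≥0∞))⁻¹
        * ((k.factorial : ℝ≥0∞) * L)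
      = (((k.factorial : ℝ≥0∞))⁻¹ * (k.factorial : ℝ≥0∞))
          * (((d.descFactorial t : ℝ≥0∞))⁻¹ * L) := by ring
    _ = ((d.descFactorial t : ℝ≥0∞))⁻¹ * L := by
        rw [ENNReal.inv_mul_cancel h1 h2, one_mul]
end

section
/- Let Z_1,…,Z_m be i.i.d. standard normal random variables, m ≥ 1. Then E[ (Σ_{i=1}^m Z_i⁴) / (Σ_{i=1}^m Z_i²) ] = 3m/(m+2). -/
open MeasureTheory ProbabilityTheory

open Real Set

/-!
For `S = ∑ zᵢ² > 0` one has `A / S = ∫₀^∞ A e^{-tS} dt`, and Fubini (justified by `A / S ≤ S`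
when `A = ∑ zᵢ⁴`) turns the expectation of the ratio into `∫₀^∞ E[A e^{-tS}] dt`. Under the
Gaussian product measure `E[zᵢ⁴ e^{-tS}]` factorises into `E[Z⁴ e^{-tZ²}] = 3 (1 + 2t)^{-5/2}`
times `m - 1` factors `E[e^{-tZ²}] = (1 + 2t)^{-1/2}`, so `E[A e^{-tS}] = 3m (1 + 2t)^{-(m/2 + 2)}`,
whose integral over `t > 0` is `3m / (m + 2)`.
-/

theorem integral_mul_exp_neg_mul_Ioi {a s : ℝ} (hs : 0 ≤ s) (has : s = 0 → a = 0) :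
    ∫ t in Ioi 0, a * exp (-s * t) = a / s := by
  rcases hs.eq_or_lt with rfl | hs
  · simp [has rfl]
  · rw [integral_const_mul, integral_exp_mul_Ioi (neg_lt_zero.2 hs), mul_zero, exp_zero]
    field_simp

theorem integrableOn_mul_exp_neg_mul_Ioi {a s : ℝ} (hs : 0 ≤ s) (has : s = 0 → a = 0) :
    IntegrableOn (fun t => a * exp (-s * t)) (Ioi 0) := by
  rcases hs.eq_or_lt with rfl | hs
  · simp [has rfl]
  · exact (exp_neg_integrableOn_Ioi 0 hs).const_mul a

theorem integral_div_eq_integral_Ioi_integral_mul_exp {α : Type*} [MeasurableSpace α]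
    {μ : Measure α} [SFinite μ] {A S : α → ℝ} (hA : Measurable A) (hS : Measurable S)
    (hS_nonneg : ∀ x, 0 ≤ S x) (hAS : ∀ x, S x = 0 → A x = 0)
    (hint : Integrable (fun x => A x / S x) μ) :
    ∫ x, A x / S x ∂μ = ∫ t in Ioi 0, ∫ x, A x * exp (-S x * t) ∂μ := by
  have hjoint : Integrable (Function.uncurry fun x t => A x * exp (-S x * t))
      (μ.prod (volume.restrict (Ioi 0))) := by
    refine (integrable_prod_iff ?_).2 ⟨ae_of_all _ fun x =>
      integrableOn_mul_exp_neg_mul_Ioi (hS_nonneg x) (hAS x), ?_⟩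
    · exact ((hA.comp measurable_fst).mul
        ((hS.comp measurable_fst).neg.mul measurable_snd).exp).aestronglyMeasurable
    · refine hint.norm.congr (ae_of_all _ fun x => ?_)
      simp only [Function.uncurry_apply_pair, norm_mul, norm_of_nonneg (exp_pos _).le, norm_div,
        norm_of_nonneg (hS_nonneg x)]
      exact (integral_mul_exp_neg_mul_Ioi (hS_nonneg x) fun h => by simp [hAS x h]).symm
  rw [← integral_integral_swap hjoint]
  exact integral_congr_ae (ae_of_all _ fun x =>
    (integral_mul_exp_neg_mul_Ioi (hS_nonneg x) (hAS x)).symm)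

theorem integral_one_add_mul_rpow_neg_Ioi {c a : ℝ} (hc : 0 < c) (ha : 1 < a) :
    ∫ t in Ioi 0, (1 + c * t) ^ (-a) = 1 / (c * (a - 1)) := by
  have ha' : a - 1 ≠ 0 := (sub_pos.2 ha).ne'
  have hderiv : ∀ t ∈ Ici (0 : ℝ), HasDerivAt (fun t => -(1 + c * t) ^ (1 - a) / (c * (a - 1)))
      ((1 + c * t) ^ (-a)) t := by
    intro t ht
    have hpos : 0 < 1 + c * t := by have : (0:ℝ) ≤ t := ht; positivity
    have := (((hasDerivAt_id t).const_mul c).const_add 1).rpow_const (p := 1 - a)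
      (Or.inl hpos.ne')
    refine (this.neg.div_const (c * (a - 1))).congr_deriv ?_
    rw [id, sub_sub_cancel_left]
    field_simp
    ring
  have hlim : Filter.Tendsto (fun t => -(1 + c * t) ^ (1 - a) / (c * (a - 1))) Filter.atTop
      (nhds 0) := by
    have := ((tendsto_rpow_neg_atTop (y := a - 1) (by linarith)).comp
      (Filter.tendsto_atTop_add_const_left _ 1 (Filter.tendsto_id.const_mul_atTop hc)))
    simpa [neg_sub] using (this.neg.div_const (c * (a - 1)))
  rw [integral_Ioi_of_hasDerivAt_of_nonneg' hderiv (fun t ht => rpow_nonneg (by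
    have : (0:ℝ) < t := ht; positivity) _) hlim]
  simp [div_eq_mul_inv, mul_comm]

theorem integral_pow_two_mul_mul_exp_neg_mul_sq (k : ℕ) {b : ℝ} (hb : 0 < b) :
    ∫ x : ℝ, x ^ (2 * k) * exp (-b * x ^ 2) = Gamma (k + 1 / 2) * b ^ (-(k + 1 / 2 : ℝ)) := by
  have hhalf : ∫ x in Ioi (0 : ℝ), x ^ (2 * k) * exp (-b * x ^ 2)
      = b ^ (-(k + 1 / 2 : ℝ)) * (1 / 2) * Gamma (k + 1 / 2) := by
    have := integral_rpow_mul_exp_neg_mul_rpow (q := ((2 * k : ℕ) : ℝ)) two_pos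
      (neg_one_lt_zero.trans_le (Nat.cast_nonneg _)) hb
    simp only [rpow_two, rpow_natCast] at this
    rw [this]
    push_cast
    ring_nf
  have heven : (fun x : ℝ => x ^ (2 * k) * exp (-b * x ^ 2))
      = fun x => |x| ^ (2 * k) * exp (-b * |x| ^ 2) := by
    simp only [pow_mul, sq_abs]
  rw [heven, integral_comp_abs (f := fun x => x ^ (2 * k) * exp (-b * x ^ 2)), hhalf]
  ring

theorem integral_pow_two_mul_mul_exp_neg_mul_sq_gaussianReal (k : ℕ) {t : ℝ} (ht : -1 / 2 < t) :
    ∫ x, x ^ (2 * k) * exp (-t * x ^ 2) ∂gaussianReal 0 1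
      = 2 ^ k / √π * Gamma (k + 1 / 2) * (1 + 2 * t) ^ (-(k + 1 / 2 : ℝ)) := by
  have hb : 0 < t + 1 / 2 := by linarith
  rw [integral_gaussianReal_eq_integral_smul one_ne_zero]
  calc ∫ x, gaussianPDFReal 0 1 x • (x ^ (2 * k) * exp (-t * x ^ 2))
      = ∫ x, (√(2 * π))⁻¹ * (x ^ (2 * k) * exp (-(t + 1 / 2) * x ^ 2)) := by
        congr 1 with x
        simp only [gaussianPDFReal, NNReal.coe_one, mul_one, sub_zero, smul_eq_mul]
        rw [mul_assoc, mul_left_comm (exp _), ← exp_add]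
        ring_nf
    _ = 2 ^ k / √π * Gamma (k + 1 / 2) * (1 + 2 * t) ^ (-(k + 1 / 2 : ℝ)) := by
        rw [integral_const_mul, integral_pow_two_mul_mul_exp_neg_mul_sq k hb,
          show t + 1 / 2 = (1 + 2 * t) / 2 by ring, div_rpow (by linarith) zero_le_two,
          rpow_neg zero_le_two, rpow_add two_pos, rpow_natCast, ← sqrt_eq_rpow,
          sqrt_mul zero_le_two]
        field_simp

theorem integral_exp_neg_mul_sq_gaussianReal {t : ℝ} (ht : -1 / 2 < t) :
    ∫ x, exp (-t * x ^ 2) ∂gaussianReal 0 1 = (1 + 2 * t) ^ (-(1 / 2 : ℝ)) := by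
  have hπ : √π ≠ 0 := (sqrt_pos.2 pi_pos).ne'
  have := integral_pow_two_mul_mul_exp_neg_mul_sq_gaussianReal 0 ht
  rw [Nat.cast_zero, zero_add, Gamma_one_half_eq] at this
  simpa [hπ] using this

theorem integral_pow_four_mul_exp_neg_mul_sq_gaussianReal {t : ℝ} (ht : -1 / 2 < t) :
    ∫ x, x ^ 4 * exp (-t * x ^ 2) ∂gaussianReal 0 1 = 3 * (1 + 2 * t) ^ (-(5 / 2 : ℝ)) := by
  have hπ : √π ≠ 0 := (sqrt_pos.2 pi_pos).ne'
  have hΓ : Gamma (2 + 1 / 2) = 3 / 4 * √π := by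
    rw [show (2 : ℝ) + 1 / 2 = 1 / 2 + 1 + 1 by norm_num, Gamma_add_one (by norm_num),
      Gamma_add_one (by norm_num), Gamma_one_half_eq]
    ring
  have := integral_pow_two_mul_mul_exp_neg_mul_sq_gaussianReal 2 ht
  rw [Nat.cast_ofNat, hΓ] at this
  rw [this]
  field_simp
  norm_num

theorem integrable_pow_mul_exp_neg_mul_sq_gaussianReal (n : ℕ) {t : ℝ} (ht : 0 ≤ t) {μ : ℝ}
    {v : NNReal} : Integrable (fun x => x ^ n * exp (-t * x ^ 2)) (gaussianReal μ v) := by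
  refine Integrable.mul_bdd (c := 1) ?_ (by fun_prop) (ae_of_all _ fun x => ?_)
  · refine (integrable_norm_iff (by fun_prop)).1 ?_
    simpa using (memLp_id_gaussianReal (μ := μ) (v := v) n).integrable_norm_pow'
  · rw [norm_of_nonneg (exp_pos _).le, exp_le_one_iff]
    nlinarith [sq_nonneg x]

section

variable {ι : Type*} [Fintype ι]

theorem sum_pow_four_div_sum_sq_le (z : ι → ℝ) :
    (∑ i, z i ^ 4) / ∑ i, z i ^ 2 ≤ ∑ i, z i ^ 2 := by
  have hS : 0 ≤ ∑ i, z i ^ 2 := by positivity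
  have hA : ∑ i, z i ^ 4 ≤ (∑ i, z i ^ 2) ^ 2 := by
    simpa only [← pow_mul] using
      Finset.sum_sq_le_sq_sum_of_nonneg (s := Finset.univ) fun i _ => sq_nonneg (z i)
  rcases hS.eq_or_lt with hS | hS
  · simp [← hS]
  · rwa [div_le_iff₀ hS, ← sq]

theorem sum_pow_four_eq_zero_of_sum_sq_eq_zero {z : ι → ℝ} (h : ∑ i, z i ^ 2 = 0) :
    ∑ i, z i ^ 4 = 0 := by
  rw [Finset.sum_eq_zero_iff_of_nonneg fun i _ => sq_nonneg (z i)] at h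
  exact Finset.sum_eq_zero fun i hi => by simp [pow_eq_zero_iff] at h ⊢; exact h i

theorem integrable_sum_pow_four_div_sum_sq {μ : Measure (ι → ℝ)}
    (h : Integrable (fun z => ∑ i, z i ^ 2) μ) :
    Integrable (fun z => (∑ i, z i ^ 4) / ∑ i, z i ^ 2) μ :=
  h.mono' (Measurable.aestronglyMeasurable (by fun_prop)) (ae_of_all _ fun z => by
    rw [norm_of_nonneg (by positivity)]
    exact sum_pow_four_div_sum_sq_le z)

theorem pow_four_mul_exp_neg_sum_sq_mul_eq_prod [DecidableEq ι] (z : ι → ℝ) (i : ι) (t : ℝ) :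
    z i ^ 4 * exp (-(∑ j, z j ^ 2) * t)
      = ∏ j, z j ^ (if j = i then 4 else 0) * exp (-t * z j ^ 2) := by
  rw [Finset.prod_mul_distrib, ← exp_sum]
  simp [pow_ite, Finset.prod_ite_eq', Finset.mul_sum, mul_comm]

theorem integral_pow_four_mul_exp_neg_sum_sq_mul_pi_gaussianReal (i : ι) {t : ℝ} (ht : 0 ≤ t) :
    ∫ z, z i ^ 4 * exp (-(∑ j, z j ^ 2) * t) ∂(Measure.pi fun _ : ι => gaussianReal 0 1)
      = 3 * (1 + 2 * t) ^ (-(Fintype.card ι / 2 + 2 : ℝ)) := by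
  classical
  have ht' : -1 / 2 < t := by linarith
  have hpos : 0 < 1 + 2 * t := by linarith
  -- `E[Z⁴ e^{-tZ²}] = 3 (1 + 2t)^{-2} E[e^{-tZ²}]`, so every factor carries `E[e^{-tZ²}]`.
  have hfactor : ∀ j, ∫ x, x ^ (if j = i then 4 else 0) * exp (-t * x ^ 2) ∂gaussianReal 0 1
      = (if j = i then 3 * (1 + 2 * t) ^ (-2 : ℝ) else 1) * (1 + 2 * t) ^ (-(1 / 2 : ℝ)) := by
    intro j
    split_ifs
    · rw [integral_pow_four_mul_exp_neg_mul_sq_gaussianReal ht', mul_assoc, ← rpow_add hpos]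
      norm_num
    · simp only [pow_zero, one_mul, integral_exp_neg_mul_sq_gaussianReal ht']
  simp_rw [pow_four_mul_exp_neg_sum_sq_mul_eq_prod _ i]
  rw [integral_fintype_prod_eq_prod
    (f := fun j x => x ^ (if j = i then 4 else 0) * exp (-t * x ^ 2))]
  simp_rw [hfactor]
  rw [Finset.prod_mul_distrib, Finset.prod_ite_eq', if_pos (Finset.mem_univ i), Finset.prod_const,
    Finset.card_univ, ← rpow_natCast, ← rpow_mul hpos.le, mul_assoc, ← rpow_add hpos]
  ring_nf

theorem integrable_pow_four_mul_exp_neg_sum_sq_mul_pi_gaussianReal (i : ι) {t : ℝ} (ht : 0 ≤ t) :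
    Integrable (fun z => z i ^ 4 * exp (-(∑ j, z j ^ 2) * t))
      (Measure.pi fun _ : ι => gaussianReal 0 1) := by
  classical
  simp_rw [pow_four_mul_exp_neg_sum_sq_mul_eq_prod _ i]
  exact Integrable.fintype_prod fun j => integrable_pow_mul_exp_neg_mul_sq_gaussianReal _ ht

theorem integral_sum_pow_four_mul_exp_neg_sum_sq_mul_pi_gaussianReal {t : ℝ} (ht : 0 ≤ t) :
    ∫ z, (∑ i, z i ^ 4) * exp (-(∑ i, z i ^ 2) * t) ∂(Measure.pi fun _ : ι => gaussianReal 0 1)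
      = 3 * Fintype.card ι * (1 + 2 * t) ^ (-(Fintype.card ι / 2 + 2 : ℝ)) := by
  simp_rw [Finset.sum_mul]
  rw [integral_finsetSum _ fun i _ =>
    integrable_pow_four_mul_exp_neg_sum_sq_mul_pi_gaussianReal i ht]
  simp_rw [integral_pow_four_mul_exp_neg_sum_sq_mul_pi_gaussianReal _ ht]
  rw [Finset.sum_const, Finset.card_univ, nsmul_eq_mul]
  ring

end

theorem gaussian_moment_ratio_general (m : ℕ) :
    (∫ z : Fin m → ℝ,
        (∑ i : Fin m, z i ^ 4) / (∑ i : Fin m, z i ^ 2)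
        ∂(Measure.pi fun _ : Fin m => gaussianReal 0 1)) =
      3 * (m : ℝ) / ((m : ℝ) + 2) := by
  have hsq : Integrable (fun z : Fin m → ℝ => ∑ i, z i ^ 2)
      (Measure.pi fun _ : Fin m => gaussianReal 0 1) :=
    integrable_finsetSum _ fun i _ =>
      integrable_comp_eval (f := fun x => x ^ 2) (memLp_id_gaussianReal 2).integrable_sq
  rw [integral_div_eq_integral_Ioi_integral_mul_exp (by fun_prop) (by fun_prop)
    (fun z => by positivity) (fun z => sum_pow_four_eq_zero_of_sum_sq_eq_zero)
    (integrable_sum_pow_four_div_sum_sq hsq)]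
  calc ∫ t in Ioi 0, ∫ z, (∑ i, z i ^ 4) * exp (-(∑ i, z i ^ 2) * t)
        ∂(Measure.pi fun _ : Fin m => gaussianReal 0 1)
      = ∫ t in Ioi 0, 3 * (m : ℝ) * (1 + 2 * t) ^ (-((m : ℝ) / 2 + 2)) :=
        setIntegral_congr_fun measurableSet_Ioi fun t ht => by
          simpa using
            integral_sum_pow_four_mul_exp_neg_sum_sq_mul_pi_gaussianReal (ι := Fin m) ht.le
    _ = 3 * (m : ℝ) / ((m : ℝ) + 2) := by
        have hm : (0 : ℝ) ≤ m := m.cast_nonneg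
        rw [integral_const_mul, integral_one_add_mul_rpow_neg_Ioi two_pos (by linarith),
          show (m : ℝ) / 2 + 2 - 1 = ((m : ℝ) + 2) / 2 by ring]
        field_simp

/-- **Fourth-to-second moment ratio for i.i.d. Gaussians**
(Dereziński–Warmuth–Hsu, computation in Theorem 14 via Proposition 17).
If `Z₁,…,Z_m` are i.i.d. standard normal (`m ≥ 1`), then
`E[(Σᵢ Zᵢ⁴)/(Σᵢ Zᵢ²)] = 3m/(m+2)`. -/
theorem gaussian_moment_ratio (m : ℕ) (hm : 1 ≤ m) :
    (∫ z : Fin m → ℝ,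
        (∑ i : Fin m, z i ^ 4) / (∑ i : Fin m, z i ^ 2)
        ∂(Measure.pi fun _ : Fin m => gaussianReal 0 1)) =
      3 * (m : ℝ) / ((m : ℝ) + 2) :=
  gaussian_moment_ratio_general m
end

section
/- Let X̄ ~ VS^k and X ~ D_X^k, let Σ₀ be a positive definite d×d matrix, let ε ∈ (0,1), and let C := { B ∈ ℝ^{d×d} : B symmetric and (1−ε)Σ₀ ⪯ B ⪯ (1+ε)Σ₀ }. Suppose Pr(X̄ᵀX̄ ∈ C) > 0 and Pr(XᵀX ∈ C) > 0. Then for every measurable set A of k×d matrices: ((1−ε)/(1+ε))^d · Pr(X ∈ A | XᵀX ∈ C) ≤ Pr(X̄ ∈ A | X̄ᵀX̄ ∈ C) ≤ ((1+ε)/(1−ε))^d · Pr(X ∈ A | XᵀX ∈ C). (Consequently, letting ε → 0, the conditional distribution of X̄ given X̄ᵀX̄ = Σ₀ coincides with that of X given XᵀX = Σ₀.) -/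
open MeasureTheory ProbabilityTheory Matrix
open scoped ENNReal

section AuxMatrix
variable {n : Type*} [Fintype n] [DecidableEq n]

lemma aux_posDef_smul {S : Matrix n n ℝ} (hS : S.PosDef) {c : ℝ} (hc : 0 < c) :
    (c • S).PosDef := by
  have hH : (c • S).IsHermitian := by
    rw [IsHermitian, conjTranspose_smul, star_trivial, hS.1.eq]
  refine posDef_iff_dotProduct_mulVec.mpr ⟨hH, fun x hx => ?_⟩
  rw [smul_mulVec, dotProduct_smul, smul_eq_mul]
  exact mul_pos hc (hS.dotProduct_mulVec_pos hx)

omit [DecidableEq n] in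
lemma aux_posDef_of_sub {A B : Matrix n n ℝ} (hA : A.PosDef) (hB : B.IsHermitian)
    (h : (B - A).PosSemidef) : B.PosDef := by
  refine posDef_iff_dotProduct_mulVec.mpr ⟨hB, fun x hx => ?_⟩
  have h1 := h.dotProduct_mulVec_nonneg x
  rw [sub_mulVec, dotProduct_sub] at h1
  have := hA.dotProduct_mulVec_pos hx
  linarith

open scoped MatrixOrder in
lemma aux_det_mono {A B : Matrix n n ℝ} (hA : A.PosDef) (hB : B.IsHermitian)
    (h : (B - A).PosSemidef) : A.det ≤ B.det := by
  classical
  set R := CFC.sqrt A with hRdef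
  have hR : R.PosSemidef := Matrix.nonneg_iff_posSemidef.mp (CFC.sqrt_nonneg A)
  have hRR : R * R = A := CFC.sqrt_mul_sqrt_self A (Matrix.nonneg_iff_posSemidef.mpr hA.posSemidef)
  have hdetA : 0 < A.det := hA.det_pos
  have hdetR : R.det ≠ 0 := by
    intro h0
    rw [← hRR, det_mul, h0, mul_zero] at hdetA
    exact lt_irrefl _ hdetA
  have hRu : IsUnit R.det := isUnit_iff_ne_zero.mpr hdetR
  have hRiR : R⁻¹ * R = 1 := nonsing_inv_mul R hRu
  have hRRi : R * R⁻¹ = 1 := mul_nonsing_inv R hRu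
  have hRH : Rᴴ = R := hR.1
  have hRiH : (R⁻¹)ᴴ = R⁻¹ := by rw [conjTranspose_nonsing_inv, hRH]
  set M := R⁻¹ * B * R⁻¹ with hMdef
  have hMH : M.IsHermitian := by
    unfold M
    rw [IsHermitian, conjTranspose_mul, conjTranspose_mul, hRiH, hB.eq, mul_assoc]
  have hAc : R⁻¹ * A * R⁻¹ = 1 := by
    rw [← hRR, ← mul_assoc, hRiR, one_mul, hRRi]
  have hM1 : (M - 1).PosSemidef := by
    have : M - 1 = R⁻¹ * (B - A) * (R⁻¹)ᴴ := by
      rw [hRiH, Matrix.mul_sub, Matrix.sub_mul, hAc]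
    rw [this]
    exact h.mul_mul_conjTranspose_same R⁻¹
  have heig : ∀ i, 1 ≤ hMH.eigenvalues i := by
    intro i
    have hv := hMH.eigenvalues_eq i
    set v := (hMH.eigenvectorBasis i : EuclideanSpace ℝ n)
    have hnorm : ‖v‖ = 1 := hMH.eigenvectorBasis.orthonormal.1 i
    have hvv : star (v : n → ℝ) ⬝ᵥ (v : n → ℝ) = 1 := by
      have h2 := real_inner_self_eq_norm_sq v
      rw [hnorm, EuclideanSpace.inner_eq_star_dotProduct] at h2
      simpa using h2
    have hpsd := hM1.dotProduct_mulVec_nonneg (v : n → ℝ)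
    rw [sub_mulVec, dotProduct_sub, one_mulVec, hvv] at hpsd
    have : hMH.eigenvalues i = star (v : n → ℝ) ⬝ᵥ (M *ᵥ (v : n → ℝ)) := by
      simpa using hv
    linarith [sub_nonneg.mp hpsd]
  have hdetM : 1 ≤ M.det := by
    rw [hMH.det_eq_prod_eigenvalues]
    calc (1:ℝ) = ∏ _i : n, 1 := by simp
      _ ≤ ∏ i, hMH.eigenvalues i :=
        Finset.prod_le_prod (fun i _ => zero_le_one) (fun i _ => heig i)
  have hdetA' : A.det = R.det * R.det := by rw [← hRR, det_mul]
  have hdet : M.det = B.det / A.det := by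
    rw [hMdef, det_mul, det_mul, det_nonsing_inv, Ring.inverse_eq_inv', hdetA']
    field_simp
  rw [hdet] at hdetM
  calc A.det = 1 * A.det := (one_mul _).symm
    _ ≤ (B.det / A.det) * A.det := by gcongr
    _ = B.det := div_mul_cancel₀ _ (ne_of_gt hdetA)

end AuxMatrix

lemma aux_det_bounds {d : ℕ} {S B : Matrix (Fin d) (Fin d) ℝ} (hS : S.PosDef)
    {ε : ℝ} (hε0 : 0 < ε) (hε1 : ε < 1) (hsym : B.IsSymm)
    (h1 : (B - (1 - ε) • S).PosSemidef) (h2 : ((1 + ε) • S - B).PosSemidef) :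
    (1 - ε) ^ d * S.det ≤ B.det ∧ B.det ≤ (1 + ε) ^ d * S.det := by
  have hBh : B.IsHermitian := by
    rw [IsHermitian, conjTranspose, show (star : ℝ → ℝ) = id from rfl]
    simpa [Matrix.transpose] using hsym.eq
  have hl : ((1 - ε) • S).PosDef := aux_posDef_smul hS (by linarith)
  have hu : ((1 + ε) • S).PosDef := aux_posDef_smul hS (by linarith)
  have hBpd : B.PosDef := aux_posDef_of_sub hl hBh h1
  have e1 : ((1 - ε) • S).det = (1 - ε) ^ d * S.det := by
    rw [det_smul, Fintype.card_fin]
  have e2 : ((1 + ε) • S).det = (1 + ε) ^ d * S.det := by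
    rw [det_smul, Fintype.card_fin]
  constructor
  · rw [← e1]; exact aux_det_mono hl hBh h1
  · rw [← e2]; exact aux_det_mono hBpd hu.1 h2

lemma aux_isClosed_posSemidef {d : ℕ} :
    IsClosed {B : Matrix (Fin d) (Fin d) ℝ | B.PosSemidef} := by
  have hset : {B : Matrix (Fin d) (Fin d) ℝ | B.PosSemidef} =
      {B : Matrix (Fin d) (Fin d) ℝ | Bᴴ = B} ∩
        ⋂ x : Fin d → ℝ, {B | 0 ≤ star x ⬝ᵥ (B *ᵥ x)} := by
    ext B
    simp [Matrix.posSemidef_iff_dotProduct_mulVec, Matrix.IsHermitian, Set.mem_iInter]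
  rw [hset]
  have hct : Continuous fun B : Matrix (Fin d) (Fin d) ℝ => Bᴴ := by
    apply continuous_matrix
    intro i j
    have hc : Continuous fun B : Matrix (Fin d) (Fin d) ℝ => B j i :=
      (continuous_apply i).comp (continuous_apply (A := fun _ : Fin d => Fin d → ℝ) j)
    simpa [Matrix.conjTranspose_apply] using hc.star
  refine (isClosed_eq hct continuous_id).inter (isClosed_iInter fun x => ?_)
  refine isClosed_le continuous_const ?_
  simp only [dotProduct, Matrix.mulVec]
  exact continuous_finset_sum _ fun i _ =>
    continuous_const.mul (continuous_finset_sum _ fun j _ =>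
      (((continuous_apply j).comp (continuous_apply (A := fun _ : Fin d => Fin d → ℝ) i)).mul continuous_const))

/-- **Conditioning volume-rescaled sampling on an approximate covariance**
(Lemma 22, Dereziński–Warmuth–Hsu).
Let `X̄ ~ VS^k` and `X ~ μ^k`, let `Σ₀` be positive definite, `ε ∈ (0,1)`, and let
`C = {B symmetric : (1−ε)Σ₀ ⪯ B ⪯ (1+ε)Σ₀}`.  If both conditioning events have positive
probability, then for every measurable set `A` of `k×d` matrices,
`((1−ε)/(1+ε))^d · Pr(X ∈ A | XᵀX ∈ C) ≤ Pr(X̄ ∈ A | X̄ᵀX̄ ∈ C)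
  ≤ ((1+ε)/(1−ε))^d · Pr(X ∈ A | XᵀX ∈ C)`. -/
theorem volume_rescaled_conditional_bounds
    {d k : ℕ} (hdk : d ≤ k)
    (μ : Measure (Fin d → ℝ)) [IsProbabilityMeasure μ]
    (hmom : ∀ i j : Fin d, Integrable (fun x : Fin d → ℝ => x i * x j) μ)
    (hSig : IsUnit (secondMoment μ).det)
    (S : Matrix (Fin d) (Fin d) ℝ) (hS : S.PosDef)
    (ε : ℝ) (hε0 : 0 < ε) (hε1 : ε < 1)
    (hV : VS μ k {X : Fin k → Fin d → ℝ |
        ((Matrix.of X)ᵀ * Matrix.of X).IsSymm ∧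
          ((Matrix.of X)ᵀ * Matrix.of X - (1 - ε) • S).PosSemidef ∧
          ((1 + ε) • S - (Matrix.of X)ᵀ * Matrix.of X).PosSemidef} ≠ 0)
    (hP : (Measure.pi fun _ : Fin k => μ) {X : Fin k → Fin d → ℝ |
        ((Matrix.of X)ᵀ * Matrix.of X).IsSymm ∧
          ((Matrix.of X)ᵀ * Matrix.of X - (1 - ε) • S).PosSemidef ∧
          ((1 + ε) • S - (Matrix.of X)ᵀ * Matrix.of X).PosSemidef} ≠ 0)
    (A : Set (Fin k → Fin d → ℝ)) (hA : MeasurableSet A) :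
    ENNReal.ofReal (((1 - ε) / (1 + ε)) ^ d) *
        (ProbabilityTheory.cond (Measure.pi fun _ : Fin k => μ)
          {X : Fin k → Fin d → ℝ |
            ((Matrix.of X)ᵀ * Matrix.of X).IsSymm ∧
              ((Matrix.of X)ᵀ * Matrix.of X - (1 - ε) • S).PosSemidef ∧
              ((1 + ε) • S - (Matrix.of X)ᵀ * Matrix.of X).PosSemidef}) A ≤
      (ProbabilityTheory.cond (VS μ k)
        {X : Fin k → Fin d → ℝ |
          ((Matrix.of X)ᵀ * Matrix.of X).IsSymm ∧
            ((Matrix.of X)ᵀ * Matrix.of X - (1 - ε) • S).PosSemidef ∧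
            ((1 + ε) • S - (Matrix.of X)ᵀ * Matrix.of X).PosSemidef}) A ∧
      (ProbabilityTheory.cond (VS μ k)
        {X : Fin k → Fin d → ℝ |
          ((Matrix.of X)ᵀ * Matrix.of X).IsSymm ∧
            ((Matrix.of X)ᵀ * Matrix.of X - (1 - ε) • S).PosSemidef ∧
            ((1 + ε) • S - (Matrix.of X)ᵀ * Matrix.of X).PosSemidef}) A ≤
      ENNReal.ofReal (((1 + ε) / (1 - ε)) ^ d) *
        (ProbabilityTheory.cond (Measure.pi fun _ : Fin k => μ)
          {X : Fin k → Fin d → ℝ |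
            ((Matrix.of X)ᵀ * Matrix.of X).IsSymm ∧
              ((Matrix.of X)ᵀ * Matrix.of X - (1 - ε) • S).PosSemidef ∧
              ((1 + ε) • S - (Matrix.of X)ᵀ * Matrix.of X).PosSemidef}) A := by
  classical
  set P : Measure (Fin k → Fin d → ℝ) := Measure.pi fun _ : Fin k => μ with hPdef
  set C : Set (Fin k → Fin d → ℝ) := {X : Fin k → Fin d → ℝ |
      ((Matrix.of X)ᵀ * Matrix.of X).IsSymm ∧
        ((Matrix.of X)ᵀ * Matrix.of X - (1 - ε) • S).PosSemidef ∧
        ((1 + ε) • S - (Matrix.of X)ᵀ * Matrix.of X).PosSemidef} with hCdef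
  have hφ : Continuous fun X : Fin k → Fin d → ℝ => (Matrix.of X)ᵀ * Matrix.of X := by
    apply continuous_matrix
    intro i j
    simp only [Matrix.mul_apply, Matrix.transpose_apply, Matrix.of_apply]
    exact continuous_finset_sum _ fun l _ =>
      ((continuous_apply i).comp (continuous_apply (A := fun _ : Fin k => Fin d → ℝ) l)).mul
        ((continuous_apply j).comp (continuous_apply (A := fun _ : Fin k => Fin d → ℝ) l))
  have hTclosed : IsClosed {B : Matrix (Fin d) (Fin d) ℝ |
      B.IsSymm ∧ (B - (1 - ε) • S).PosSemidef ∧ ((1 + ε) • S - B).PosSemidef} := by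
    have h1 : IsClosed {B : Matrix (Fin d) (Fin d) ℝ | B.IsSymm} := by
      have hct : Continuous fun B : Matrix (Fin d) (Fin d) ℝ => Bᵀ := by
        apply continuous_matrix
        intro i j
        exact (continuous_apply i).comp (continuous_apply (A := fun _ : Fin d => Fin d → ℝ) j)
      exact isClosed_eq hct continuous_id
    have h2 : IsClosed {B : Matrix (Fin d) (Fin d) ℝ | (B - (1 - ε) • S).PosSemidef} :=
      aux_isClosed_posSemidef.preimage (continuous_id.sub continuous_const)
    have h3 : IsClosed {B : Matrix (Fin d) (Fin d) ℝ | ((1 + ε) • S - B).PosSemidef} :=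
      aux_isClosed_posSemidef.preimage (continuous_const.sub continuous_id)
    exact h1.inter (h2.inter h3)
  have hCm : MeasurableSet C :=
    (hTclosed.preimage hφ).measurableSet
  set c : ℝ := (k.descFactorial d : ℝ) * (secondMoment μ).det with hcdef
  set g : (Fin k → Fin d → ℝ) → ℝ≥0∞ := fun X =>
    ENNReal.ofReal (((Matrix.of X)ᵀ * Matrix.of X).det / c) with hgdef
  have hVS : VS μ k = P.withDensity g := rfl
  set a : ℝ := (1 - ε) ^ d * S.det with hadef
  set b : ℝ := (1 + ε) ^ d * S.det with hbdef
  have ha : 0 < a := mul_pos (pow_pos (by linarith) d) hS.det_pos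
  have hb : 0 < b := mul_pos (pow_pos (by linarith) d) hS.det_pos
  have hdetC : ∀ X ∈ C, a ≤ ((Matrix.of X)ᵀ * Matrix.of X).det ∧
      ((Matrix.of X)ᵀ * Matrix.of X).det ≤ b := fun X hX =>
    aux_det_bounds hS hε0 hε1 hX.1 hX.2.1 hX.2.2
  have hc : 0 < c := by
    by_contra hcle
    push_neg at hcle
    apply hV
    rw [hVS, withDensity_apply _ hCm]
    refine le_antisymm ?_ (zero_le)
    calc ∫⁻ X in C, g X ∂P ≤ ∫⁻ _X in C, 0 ∂P := by
          refine setLIntegral_mono' hCm fun X hX => le_of_eq ?_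
          simp only [hgdef]
          exact ENNReal.ofReal_eq_zero.mpr
            (div_nonpos_of_nonneg_of_nonpos (le_trans ha.le (hdetC X hX).1) hcle)
      _ = 0 := by simp
  have hgl : ∀ X ∈ C, ENNReal.ofReal (a / c) ≤ g X := by
    intro X hX
    simp only [hgdef]
    exact ENNReal.ofReal_le_ofReal ((div_le_div_iff_of_pos_right hc).mpr (hdetC X hX).1)
  have hgu : ∀ X ∈ C, g X ≤ ENNReal.ofReal (b / c) := by
    intro X hX
    simp only [hgdef]
    exact ENNReal.ofReal_le_ofReal ((div_le_div_iff_of_pos_right hc).mpr (hdetC X hX).2)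
  have key : ∀ E : Set (Fin k → Fin d → ℝ), MeasurableSet E → E ⊆ C →
      ENNReal.ofReal (a / c) * P E ≤ VS μ k E ∧
        VS μ k E ≤ ENNReal.ofReal (b / c) * P E := by
    intro E hE hEC
    rw [hVS, withDensity_apply _ hE]
    constructor
    · calc ENNReal.ofReal (a / c) * P E = ∫⁻ _X in E, ENNReal.ofReal (a / c) ∂P :=
            (setLIntegral_const E _).symm
        _ ≤ ∫⁻ X in E, g X ∂P := setLIntegral_mono' hE fun X hX => hgl X (hEC hX)
    · calc (∫⁻ X in E, g X ∂P) ≤ ∫⁻ _X in E, ENNReal.ofReal (b / c) ∂P :=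
            setLIntegral_mono' hE fun X hX => hgu X (hEC hX)
        _ = ENNReal.ofReal (b / c) * P E := setLIntegral_const E _
  have hPCfin : P C ≠ ⊤ := by rw [hPdef]; exact measure_ne_top _ _
  have hCA : MeasurableSet (C ∩ A) := hCm.inter hA
  have hkeyC := key C hCm subset_rfl
  have hkeyCA := key (C ∩ A) hCA Set.inter_subset_left
  have h1e : (1:ℝ) - ε ≠ 0 := ne_of_gt (by linarith)
  have h2e : (1:ℝ) + ε ≠ 0 := ne_of_gt (by linarith)
  have hde : S.det ≠ 0 := ne_of_gt hS.det_pos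
  have harith1 : (a / c) / (b / c) = ((1 - ε) / (1 + ε)) ^ d := by
    rw [hadef, hbdef, div_pow]
    field_simp
  have harith2 : (b / c) / (a / c) = ((1 + ε) / (1 - ε)) ^ d := by
    rw [hadef, hbdef, div_pow]
    field_simp
  rw [ProbabilityTheory.cond_apply hCm P A, ProbabilityTheory.cond_apply hCm (VS μ k) A]
  constructor
  · have h1 : (ENNReal.ofReal (b / c) * P C)⁻¹ * (ENNReal.ofReal (a / c) * P (C ∩ A)) ≤
        (VS μ k C)⁻¹ * VS μ k (C ∩ A) :=
      mul_le_mul' (ENNReal.inv_le_inv.mpr hkeyC.2) hkeyCA.1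
    refine le_trans (le_of_eq ?_) h1
    rw [ENNReal.mul_inv (Or.inr hPCfin) (Or.inl ENNReal.ofReal_ne_top)]
    have hq : ENNReal.ofReal (((1 - ε) / (1 + ε)) ^ d) =
        (ENNReal.ofReal (b / c))⁻¹ * ENNReal.ofReal (a / c) := by
      rw [← harith1, ENNReal.ofReal_div_of_pos (div_pos hb hc), div_eq_mul_inv, mul_comm]
    rw [hq]
    exact mul_mul_mul_comm _ _ _ _
  · have h1 : (VS μ k C)⁻¹ * VS μ k (C ∩ A) ≤
        (ENNReal.ofReal (a / c) * P C)⁻¹ * (ENNReal.ofReal (b / c) * P (C ∩ A)) :=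
      mul_le_mul' (ENNReal.inv_le_inv.mpr hkeyC.1) hkeyCA.2
    refine le_trans h1 (le_of_eq ?_)
    rw [ENNReal.mul_inv (Or.inr hPCfin) (Or.inl ENNReal.ofReal_ne_top)]
    have hq : ENNReal.ofReal (((1 + ε) / (1 - ε)) ^ d) =
        (ENNReal.ofReal (a / c))⁻¹ * ENNReal.ofReal (b / c) := by
      rw [← harith2, ENNReal.ofReal_div_of_pos (div_pos ha hc), div_eq_mul_inv, mul_comm]
    rw [hq]
    exact (mul_mul_mul_comm _ _ _ _).symm
end

section
/- Let (x₁, y₁) and (x₂, y₂) be i.i.d. random pairs in ℝ^d × ℝ, let M ∈ ℝ^{d×d} be a symmetric positive semidefinite matrix, and let w ∈ ℝ^d. Assume the displayed expectation exists. Then E[ (y₁ − x₁ᵀw)·(y₂ − x₂ᵀw)·(x₁ᵀ M x₂)³ ] ≥ 0. (This expectation can be written as vᵀ(M ⊗ M ⊗ M)v ≥ 0 with v the vector of moments E[(y − xᵀw)·x_{i₁}x_{i₂}x_{i₃}], since M ⊗ M ⊗ M is positive semidefinite.) -/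
open MeasureTheory Matrix Filter

private lemma cube_expand {d : ℕ} (u v : ℝ) (a b : Fin d → ℝ) :
    u * v * (∑ i, a i * b i)^3 =
    ∑ c : Fin d × Fin d × Fin d,
      (u * (a c.1 * a c.2.1 * a c.2.2)) * (v * (b c.1 * b c.2.1 * b c.2.2)) := by
  simp only [Fintype.sum_prod_type]
  rw [show (∑ i, a i * b i)^3 = (∑ i, a i * b i) * ((∑ i, a i * b i) * (∑ i, a i * b i)) by ring]
  rw [Finset.sum_mul_sum, Finset.sum_mul_sum]
  simp only [Finset.mul_sum]
  exact Finset.sum_congr rfl fun i _ => Finset.sum_congr rfl fun j _ =>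
    Finset.sum_congr rfl fun k _ => by ring


/-- **Nonnegativity of the cubic cross-moment term**
(Dereziński–Warmuth–Hsu, proof of Theorem 11).
If `(x₁, y₁)` and `(x₂, y₂)` are i.i.d. pairs in `ℝ^d × ℝ`, `M` is positive semidefinite
and `w ∈ ℝ^d`, then `E[(y₁ − x₁ᵀw)(y₂ − x₂ᵀw)(x₁ᵀMx₂)³] ≥ 0` (assuming the expectation
exists). -/
theorem cubic_cross_moment_nonneg
    {d : ℕ} (ρ : Measure ((Fin d → ℝ) × ℝ)) [IsProbabilityMeasure ρ]
    (M : Matrix (Fin d) (Fin d) ℝ) (hM : M.PosSemidef) (w : Fin d → ℝ)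
    (hInt : Integrable
      (fun p : ((Fin d → ℝ) × ℝ) × ((Fin d → ℝ) × ℝ) =>
        (p.1.2 - dotProduct p.1.1 w) * (p.2.2 - dotProduct p.2.1 w) *
          (dotProduct p.1.1 (Matrix.mulVec M p.2.1)) ^ 3)
      (ρ.prod ρ)) :
    0 ≤ ∫ p : ((Fin d → ℝ) × ℝ) × ((Fin d → ℝ) × ℝ),
        (p.1.2 - dotProduct p.1.1 w) * (p.2.2 - dotProduct p.2.1 w) *
          (dotProduct p.1.1 (Matrix.mulVec M p.2.1)) ^ 3
        ∂(ρ.prod ρ) := by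
  obtain ⟨A, hAsymm, hAAM⟩ : ∃ A : Matrix (Fin d) (Fin d) ℝ, Aᵀ = A ∧ A * A = M :=
    by
      open scoped MatrixOrder in
      exact ⟨CFC.sqrt M, (CFC.sqrt_nonneg M).posSemidef.isHermitian, CFC.sqrt_mul_sqrt_self M hM.nonneg⟩
  -- kernel factorization
  have hK : ∀ x y : Fin d → ℝ, dotProduct x (Matrix.mulVec M y)
      = ∑ i, (A *ᵥ x) i * (A *ᵥ y) i := by
    intro x y
    rw [← hAAM, ← Matrix.mulVec_mulVec, dotProduct_mulVec,
      ← Matrix.mulVec_transpose, hAsymm]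
    rfl
  set f : (Fin d → ℝ) × ℝ → ℝ := fun p => p.2 - dotProduct p.1 w with hf
  have hf_cont : Continuous f := by
    simp only [hf, dotProduct]
    fun_prop
  set g : Fin d × Fin d × Fin d → ((Fin d → ℝ) × ℝ) → ℝ := fun c p =>
    (A *ᵥ p.1) c.1 * (A *ᵥ p.1) c.2.1 * (A *ᵥ p.1) c.2.2 with hg
  have hAv : ∀ i, Continuous fun p : (Fin d → ℝ) × ℝ => (A *ᵥ p.1) i := by
    intro i
    simp only [Matrix.mulVec, dotProduct]
    fun_prop
  have hg_cont : ∀ c, Continuous (g c) := fun c =>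
    ((hAv c.1).mul (hAv c.2.1)).mul (hAv c.2.2)
  -- truncations
  set S : ℕ → Set ((Fin d → ℝ) × ℝ) := fun n => {p : (Fin d → ℝ) × ℝ | ‖p.1‖ ≤ n ∧ |f p| ≤ n} with hS
  have hS_meas : ∀ n, MeasurableSet (S n) := by
    intro n
    exact ((isClosed_le (continuous_norm.comp continuous_fst) continuous_const).inter
      (isClosed_le hf_cont.abs continuous_const)).measurableSet
  set fn : ℕ → ((Fin d → ℝ) × ℝ) → ℝ := fun n => (S n).indicator f with hfn
  have hfn_meas : ∀ n, Measurable (fn n) := fun n =>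
    hf_cont.measurable.indicator (hS_meas n)
  have hfn_le : ∀ n p, |fn n p| ≤ |f p| := by
    intro n p
    by_cases h : p ∈ S n
    · simp [hfn, Set.indicator_of_mem h]
    · simp [hfn, Set.indicator_of_notMem h, abs_nonneg]
  -- bound on g on the truncated set
  set B : ℝ := ∑ i, ∑ j, |A i j| with hB
  have hB0 : 0 ≤ B := Finset.sum_nonneg fun i _ => Finset.sum_nonneg fun j _ => abs_nonneg _
  have hAbd : ∀ (x : Fin d → ℝ) (i : Fin d), |(A *ᵥ x) i| ≤ B * ‖x‖ := by
    intro x i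
    calc |(A *ᵥ x) i| = |∑ j, A i j * x j| := rfl
      _ ≤ ∑ j, |A i j * x j| := Finset.abs_sum_le_sum_abs _ _
      _ ≤ ∑ j, |A i j| * ‖x‖ := by
          refine Finset.sum_le_sum fun j _ => ?_
          rw [abs_mul]
          exact mul_le_mul_of_nonneg_left (norm_le_pi_norm x j) (abs_nonneg _)
      _ = (∑ j, |A i j|) * ‖x‖ := by rw [Finset.sum_mul]
      _ ≤ B * ‖x‖ := by
          refine mul_le_mul_of_nonneg_right ?_ (norm_nonneg _)
          exact Finset.single_le_sum (f := fun i => ∑ j, |A i j|)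
            (fun i _ => Finset.sum_nonneg fun j _ => abs_nonneg _) (Finset.mem_univ i)
  -- integrability of truncated pieces
  have hInt1 : ∀ (n : ℕ) (c : Fin d × Fin d × Fin d),
      Integrable (fun p => fn n p * g c p) ρ := by
    intro n c
    refine (integrable_const ((n : ℝ) * ((B * n) * (B * n) * (B * n)))).mono'
      ((hfn_meas n).mul (hg_cont c).measurable).aestronglyMeasurable
      (ae_of_all _ fun p => ?_)
    by_cases h : p ∈ S n
    · have hx : ‖p.1‖ ≤ n := h.1
      have hgb : |g c p| ≤ (B * n) * (B * n) * (B * n) := by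
        have h1 : ∀ i, |(A *ᵥ p.1) i| ≤ B * n := fun i =>
          (hAbd p.1 i).trans (mul_le_mul_of_nonneg_left hx hB0)
        calc |g c p| = |(A *ᵥ p.1) c.1| * |(A *ᵥ p.1) c.2.1| * |(A *ᵥ p.1) c.2.2| := by
              simp [hg, abs_mul]
          _ ≤ (B * n) * (B * n) * (B * n) := by
              have h0 : ∀ i, (0:ℝ) ≤ |(A *ᵥ p.1) i| := fun i => abs_nonneg _
              exact mul_le_mul (mul_le_mul (h1 _) (h1 _) (h0 _)
                (mul_nonneg hB0 n.cast_nonneg)) (h1 _) (h0 _)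
                (mul_nonneg (mul_nonneg hB0 n.cast_nonneg) (mul_nonneg hB0 n.cast_nonneg))
      have hfb : |fn n p| ≤ n := by
        rw [hfn]; simp only [Set.indicator_of_mem h]; exact h.2
      calc ‖fn n p * g c p‖ = |fn n p| * |g c p| := abs_mul _ _
        _ ≤ (n : ℝ) * ((B * n) * (B * n) * (B * n)) :=
            mul_le_mul hfb hgb (abs_nonneg _) n.cast_nonneg
    · simp only [hfn, Set.indicator_of_notMem h, zero_mul, norm_zero]
      positivity
  -- step 1 : each truncated double integral is nonneg
  have step : ∀ n : ℕ, 0 ≤ ∫ z : ((Fin d → ℝ) × ℝ) × ((Fin d → ℝ) × ℝ),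
      fn n z.1 * fn n z.2 * (dotProduct z.1.1 (Matrix.mulVec M z.2.1)) ^ 3
      ∂(ρ.prod ρ) := by
    intro n
    have hrw : ∀ z : ((Fin d → ℝ) × ℝ) × ((Fin d → ℝ) × ℝ),
        fn n z.1 * fn n z.2 * (dotProduct z.1.1 (Matrix.mulVec M z.2.1)) ^ 3
        = ∑ c : Fin d × Fin d × Fin d, (fn n z.1 * g c z.1) * (fn n z.2 * g c z.2) := by
      intro z
      rw [hK]
      exact cube_expand _ _ _ _
    simp only [hrw]
    rw [integral_finset_sum _ (fun c _ => (hInt1 n c).mul_prod (hInt1 n c))]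
    refine Finset.sum_nonneg fun c _ => ?_
    rw [integral_prod_mul (fun p => fn n p * g c p) (fun p => fn n p * g c p)]
    exact mul_self_nonneg _
  -- step 2 : dominated convergence
  have htend : Tendsto (fun n => ∫ z : ((Fin d → ℝ) × ℝ) × ((Fin d → ℝ) × ℝ),
      fn n z.1 * fn n z.2 * (dotProduct z.1.1 (Matrix.mulVec M z.2.1)) ^ 3
      ∂(ρ.prod ρ)) atTop (nhds (∫ z : ((Fin d → ℝ) × ℝ) × ((Fin d → ℝ) × ℝ),
      f z.1 * f z.2 * (dotProduct z.1.1 (Matrix.mulVec M z.2.1)) ^ 3 ∂(ρ.prod ρ))) := by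
    refine tendsto_integral_of_dominated_convergence
      (fun z => |f z.1 * f z.2 * (dotProduct z.1.1 (Matrix.mulVec M z.2.1)) ^ 3|)
      (fun n => ?_) hInt.abs (fun n => ae_of_all _ fun z => ?_) (ae_of_all _ fun z => ?_)
    · exact (((hfn_meas n).comp measurable_fst).mul
        ((hfn_meas n).comp measurable_snd)).mul
        ((by simp only [Matrix.mulVec, dotProduct]; fun_prop :
          Continuous fun z : ((Fin d → ℝ) × ℝ) × ((Fin d → ℝ) × ℝ) =>
          (dotProduct z.1.1 (Matrix.mulVec M z.2.1)) ^ 3).measurable) |>.aestronglyMeasurable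
    · simp only [Real.norm_eq_abs, abs_mul]
      exact mul_le_mul (mul_le_mul (hfn_le n z.1) (hfn_le n z.2) (abs_nonneg _)
        (abs_nonneg _)) le_rfl (abs_nonneg _) (mul_nonneg (abs_nonneg _) (abs_nonneg _))
    · -- pointwise convergence
      have h1 : ∀ p : (Fin d → ℝ) × ℝ, Tendsto (fun n => fn n p) atTop (nhds (f p)) := by
        intro p
        refine tendsto_const_nhds.congr' ?_
        filter_upwards [eventually_ge_atTop (⌈max ‖p.1‖ |f p|⌉₊)] with n hn
        have hn' : max ‖p.1‖ |f p| ≤ n :=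
          (Nat.le_ceil _).trans (by exact_mod_cast Nat.cast_le.mpr hn)
        have hp : p ∈ S n := ⟨(le_max_left _ _).trans hn', (le_max_right _ _).trans hn'⟩
        simp [hfn, Set.indicator_of_mem hp]
      exact ((h1 z.1).mul (h1 z.2)).mul tendsto_const_nhds
  exact ge_of_tendsto' htend step
end
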